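/- arXiv:2512.14021 — 5 statements merged into one kernel-verified Lean document; each statement's English description precedes it below -/
import Mathlib

section
/- Let H ∈ (0,1/2), S > 0 and n ≥ 1 an integer. Then the weak variance V_n(W^H,S) := sup over 0 ≤ s_1 < t_1 < s_2 < t_2 < … < s_n < t_n ≤ S of E[(Σ_{i=1}^n (W^H_{t_i} − W^H_{s_i}))²] satisfies (1/8)·n^{1−2H}·S^{2H} ≤ V_n(W^H,S) ≤ n^{1−2H}·S^{2H}. -/
open MeasureTheory ProbabilityTheory Filter Asymptotics

noncomputable section

/-- Covariance function of fractional Brownian motion with Hurst index `H`. -/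
def fbmCov (H s t : ℝ) : ℝ := (s ^ (2 * H) + t ^ (2 * H) - |t - s| ^ (2 * H)) / 2

/-- `W` is a fractional Brownian motion with Hurst index `H` on the probability space `(Ω, P)`:
a centered Gaussian process with continuous sample paths on `[0, ∞)` and covariance
`E[W s * W t] = fbmCov H s t`. -/
structure IsFractionalBM {Ω : Type*} [MeasurableSpace Ω] (P : Measure Ω) (H : ℝ)
    (W : ℝ → Ω → ℝ) : Prop where
  measurable : ∀ t, Measurable (W t)
  contPaths : ∀ ω, ContinuousOn (fun t => W t ω) (Set.Ici 0)
  gaussian : ∀ (n : ℕ) (t : Fin n → ℝ) (a : Fin n → ℝ), (∀ i, 0 ≤ t i) →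
    Measure.map (fun ω => ∑ i, a i * W (t i) ω) P =
      gaussianReal 0 (Real.toNNReal (∑ i, ∑ j, a i * a j * fbmCov H (t i) (t j)))

/-- Weak variance `V_n(W,S)`: the supremum, over `0 ≤ s₁ < t₁ < s₂ < t₂ < … < sₙ < tₙ ≤ S`,
of `E[(Σᵢ (W_{tᵢ} - W_{sᵢ}))²]`. -/
def weakVar {Ω : Type*} [MeasurableSpace Ω] (P : Measure Ω) (W : ℝ → Ω → ℝ)
    (n : ℕ) (S : ℝ) : ℝ :=
  sSup {x : ℝ | ∃ u v : Fin n → ℝ,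
    (∀ i, 0 ≤ u i) ∧ (∀ i, u i < v i) ∧ (∀ i, v i ≤ S) ∧
    (∀ i j : Fin n, i < j → v i < u j) ∧
    x = ∫ ω, (∑ i, (W (v i) ω - W (u i) ω)) ^ 2 ∂P}


open Real Set Finset
open scoped ENNReal NNReal

lemma sq_eq_rpow_two (x : ℝ) : x ^ (2:ℝ) = x ^ 2 := by
  rw [show (2:ℝ) = ((2:ℕ):ℝ) by norm_num, Real.rpow_natCast]

lemma integrable_sq_mul_exp_neg_mul_sq {b : ℝ} (hb : 0 < b) :
    Integrable (fun x : ℝ => x ^ 2 * Real.exp (-b * x ^ 2)) := by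
  have := integrable_rpow_mul_exp_neg_mul_sq hb (by norm_num : (-1:ℝ) < 2)
  simpa [sq_eq_rpow_two] using this

lemma integral_sq_mul_exp_neg_mul_sq {b : ℝ} (hb : 0 < b) :
    ∫ x : ℝ, x ^ 2 * Real.exp (-b * x ^ 2) = Real.sqrt (π / b) / (2 * b) := by
  have hF : ∀ x : ℝ, HasDerivAt (fun y : ℝ => y * Real.exp (-b * y ^ 2))
      (Real.exp (-b * x ^ 2) - 2 * b * (x ^ 2 * Real.exp (-b * x ^ 2))) x := by
    intro x
    have h1 : HasDerivAt (fun y : ℝ => -b * y ^ 2) (-b * (2 * x)) x := by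
      simpa using (hasDerivAt_pow 2 x).const_mul (-b)
    have h2 := h1.exp
    have h3 := (hasDerivAt_id x).mul h2
    refine HasDerivAt.congr_deriv h3 ?_
    rw [id_eq]
    ring
  have hf' : Integrable (fun x : ℝ =>
      Real.exp (-b * x ^ 2) - 2 * b * (x ^ 2 * Real.exp (-b * x ^ 2))) :=
    (integrable_exp_neg_mul_sq hb).sub ((integrable_sq_mul_exp_neg_mul_sq hb).const_mul _)
  have h0 := integral_eq_zero_of_hasDerivAt_of_integrable hF hf'
    (integrable_mul_exp_neg_mul_sq hb)
  rw [integral_sub (integrable_exp_neg_mul_sq hb)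
      ((integrable_sq_mul_exp_neg_mul_sq hb).const_mul _),
    integral_const_mul, integral_gaussian] at h0
  have h2b : (2 * b) ≠ 0 := by positivity
  field_simp at h0 ⊢
  linarith

lemma integral_sq_gaussianReal (v : ℝ≥0) :
    ∫ x : ℝ, x ^ 2 ∂(gaussianReal 0 v) = (v:ℝ) := by
  by_cases hv : v = 0
  · simp [hv, gaussianReal_zero_var]
  · have hv0 : (0:ℝ) < v := lt_of_le_of_ne v.coe_nonneg (by exact_mod_cast (Ne.symm hv))
    rw [gaussianReal_of_var_ne_zero _ hv]
    have hmeas : Measurable fun x : ℝ => Real.toNNReal (gaussianPDFReal 0 v x) := by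
      exact (measurable_gaussianPDFReal 0 v).real_toNNReal
    have hPDF : (gaussianPDF 0 v) = fun x => ((Real.toNNReal (gaussianPDFReal 0 v x) : ℝ≥0) : ℝ≥0∞) := by
      funext x; rfl
    rw [hPDF, integral_withDensity_eq_integral_smul hmeas]
    have : ∀ x : ℝ, (Real.toNNReal (gaussianPDFReal 0 v x)) • (x ^ 2)
        = (Real.sqrt (2 * π * v))⁻¹ * (x ^ 2 * Real.exp (-(2*(v:ℝ))⁻¹ * x ^ 2)) := by
      intro x
      rw [NNReal.smul_def, Real.coe_toNNReal _ (gaussianPDFReal_nonneg 0 v x)]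
      unfold gaussianPDFReal
      rw [sub_zero, show -x ^ 2 / (2 * (v:ℝ)) = -(2*(v:ℝ))⁻¹ * x ^ 2 by field_simp]
      rw [smul_eq_mul]
      ring
    rw [funext this, integral_const_mul]
    have hbpos : (0:ℝ) < (2*(v:ℝ))⁻¹ := by positivity
    rw [integral_sq_mul_exp_neg_mul_sq hbpos]
    have h1 : π / (2*(v:ℝ))⁻¹ = 2 * π * v := by field_simp
    have h2 : (2 * ((2*(v:ℝ))⁻¹)) = (v:ℝ)⁻¹ := by field_simp
    rw [h1, h2]
    have hs : Real.sqrt (2 * π * v) ≠ 0 := by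
      refine ne_of_gt (Real.sqrt_pos.2 (by positivity))
    field_simp

lemma rpow_mvt {p a b : ℝ} (ha : 0 < a) (hab : a < b) :
    ∃ ξ, a < ξ ∧ ξ < b ∧ b ^ p - a ^ p = p * ξ ^ (p - 1) * (b - a) := by
  have hcont : ContinuousOn (fun x : ℝ => x ^ p) (Set.Icc a b) := fun x hx =>
    (Real.continuousAt_rpow_const x p (Or.inl (ne_of_gt (lt_of_lt_of_le ha hx.1)))).continuousWithinAt
  have hderiv : ∀ x ∈ Set.Ioo a b, HasDerivAt (fun x : ℝ => x ^ p) (p * x ^ (p - 1)) x :=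
    fun x hx => Real.hasDerivAt_rpow_const (Or.inl (ne_of_gt (lt_trans ha hx.1)))
  obtain ⟨ξ, hξ, h⟩ := exists_hasDerivAt_eq_slope (fun x : ℝ => x ^ p)
    (fun x => p * x ^ (p - 1)) hab hcont hderiv
  refine ⟨ξ, hξ.1, hξ.2, ?_⟩
  have hba : b - a ≠ 0 := ne_of_gt (by linarith)
  field_simp at h
  linarith [h]

lemma rpow_base_antitone {q x y : ℝ} (hq : q ≤ 0) (hx : 0 < x) (hxy : x ≤ y) :
    y ^ q ≤ x ^ q :=
  Real.antitoneOn_rpow_Ioi_of_exponent_nonpos hq (Set.mem_Ioi.2 hx)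
    (Set.mem_Ioi.2 (lt_of_lt_of_le hx hxy)) hxy

lemma hasDerivAt_shift_rpow (r c y : ℝ) (hy : y + c ≠ 0) :
    HasDerivAt (fun z : ℝ => (z + c) ^ r) (r * (y + c) ^ (r - 1)) y := by
  have h1 : HasDerivAt (fun z : ℝ => z + c) 1 y := (hasDerivAt_id y).add_const c
  have h2 : HasDerivAt (fun w : ℝ => w ^ r) (r * (y + c) ^ (r - 1)) (y + c) :=
    Real.hasDerivAt_rpow_const (Or.inl hy)
  have h3 := h2.comp y h1
  rw [mul_one] at h3
  exact h3

lemma kappa_le {r x : ℝ} (hr0 : 0 < r) (hr1 : r < 1) (hx : 1 ≤ x) :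
    2 * (x + 1) ^ r - x ^ r - (x + 2) ^ r ≤ r * (1 - r) * x ^ (r - 2) := by
  have hx0 : 0 < x := lt_of_lt_of_le one_pos hx
  -- MVT for g y = (y+1)^r - y^r on [x, x+1]
  have hg : ∀ y ∈ Set.Ioo x (x + 1), HasDerivAt (fun y : ℝ => (y + 1) ^ r - y ^ r)
      (r * (y + 1) ^ (r - 1) - r * y ^ (r - 1)) y := by
    intro y hy
    have hy0 : 0 < y := lt_trans hx0 hy.1
    exact (hasDerivAt_shift_rpow r 1 y (by linarith)).sub
      (Real.hasDerivAt_rpow_const (Or.inl (ne_of_gt hy0)))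
  have hgc : ContinuousOn (fun y : ℝ => (y + 1) ^ r - y ^ r) (Set.Icc x (x + 1)) := by
    intro y hy
    have hy0 : 0 < y := lt_of_lt_of_le hx0 hy.1
    exact (((hasDerivAt_shift_rpow r 1 y (by linarith)).sub
      (Real.hasDerivAt_rpow_const (Or.inl (ne_of_gt hy0)))).continuousAt).continuousWithinAt
  obtain ⟨ξ, hξ, h⟩ := exists_hasDerivAt_eq_slope _ _ (by linarith : x < x + 1) hgc hg
  have hξ0 : 0 < ξ := lt_trans hx0 hξ.1
  -- second MVT on [ξ, ξ+1] for p = r - 1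
  obtain ⟨η, hη1, hη2, h2⟩ := rpow_mvt (p := r - 1) hξ0 (by linarith : ξ < ξ + 1)
  -- h : r * (ξ+1)^(r-1) - r * ξ^(r-1) = ((x+1+1)^r - (x+1)^r - ((x+1)^r - x^r)) / 1
  have hsimp : r * (ξ + 1) ^ (r - 1) - r * ξ ^ (r - 1)
      = (x + 2) ^ r - 2 * (x + 1) ^ r + x ^ r := by
    rw [h]; ring_nf
  have h3 : (ξ + 1) ^ (r - 1) - ξ ^ (r - 1) = (r - 1) * η ^ (r - 1 - 1) := by
    have := h2; ring_nf at this ⊢; linarith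
  have hη0 : 0 < η := lt_trans hξ0 hη1
  have hmono : η ^ (r - 2) ≤ x ^ (r - 2) :=
    rpow_base_antitone (by linarith) hx0 (by linarith [hξ.1, hη1])
  have key : 2 * (x + 1) ^ r - x ^ r - (x + 2) ^ r = r * (1 - r) * η ^ (r - 2) := by
    have : r * ((ξ + 1) ^ (r - 1) - ξ ^ (r - 1)) = (x + 2) ^ r - 2 * (x + 1) ^ r + x ^ r := by
      rw [← hsimp]; ring
    rw [h3] at this
    have hee : r - 1 - 1 = r - 2 := by ring
    rw [hee] at this
    linarith [this]
  rw [key]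
  have : (0:ℝ) ≤ r * (1 - r) := by nlinarith
  exact mul_le_mul_of_nonneg_left hmono this

lemma tail_pair {r a b : ℝ} (hr1 : r < 1) (h0 : 0 < a) (hab : a < b) :
    (1 - r) * ((b - a) * b ^ (r - 2)) ≤ a ^ (r - 1) - b ^ (r - 1) := by
  obtain ⟨ξ, hξ1, hξ2, h⟩ := rpow_mvt (p := r - 1) h0 hab
  have hmono : b ^ (r - 2) ≤ ξ ^ (r - 2) :=
    rpow_base_antitone (by linarith) (lt_trans h0 hξ1) (le_of_lt hξ2)
  have hee : r - 1 - 1 = r - 2 := by ring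
  rw [hee] at h
  nlinarith [mul_le_mul_of_nonneg_left hmono (le_of_lt (sub_pos.2 hab))]

lemma sub_rpow_le {r L a b : ℝ} (hr0 : 0 < r) (hr1 : r < 1) (hL : 0 ≤ L)
    (ha : 0 ≤ a) (hab : a ≤ b) : (b + L) ^ r - b ^ r ≤ (a + L) ^ r - a ^ r := by
  rcases eq_or_lt_of_le hab with h | h
  · rw [h]
  have hgc : ContinuousOn (fun y : ℝ => (y + L) ^ r - y ^ r) (Set.Icc a b) := by
    intro y hy
    have hy0 : 0 ≤ y := le_trans ha hy.1
    refine ContinuousWithinAt.sub ?_ ?_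
    · have hc : ContinuousAt (fun z : ℝ => (z + L) ^ r) y := by
        refine ContinuousAt.comp (g := fun w : ℝ => w ^ r) ?_ (by fun_prop)
        exact Real.continuousAt_rpow_const (y + L) r (Or.inr hr0.le)
      exact hc.continuousWithinAt
    · exact (Real.continuousAt_rpow_const y r (Or.inr hr0.le)).continuousWithinAt
  have hg : ∀ y ∈ Set.Ioo a b, HasDerivAt (fun y : ℝ => (y + L) ^ r - y ^ r)
      (r * (y + L) ^ (r - 1) - r * y ^ (r - 1)) y := by
    intro y hy
    have hy0 : 0 < y := lt_of_le_of_lt ha hy.1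
    exact (hasDerivAt_shift_rpow r L y (by linarith)).sub
      (Real.hasDerivAt_rpow_const (Or.inl (ne_of_gt hy0)))
  obtain ⟨ξ, hξ, hs⟩ := exists_hasDerivAt_eq_slope _ _ h hgc hg
  have hξ0 : 0 < ξ := lt_of_le_of_lt ha hξ.1
  have hd : r * (ξ + L) ^ (r - 1) - r * ξ ^ (r - 1) ≤ 0 := by
    have := rpow_base_antitone (q := r - 1) (by linarith) hξ0 (by linarith : ξ ≤ ξ + L)
    nlinarith
  have hba : 0 < b - a := sub_pos.2 h
  have := hs
  have h2 : ((b + L) ^ r - b ^ r - ((a + L) ^ r - a ^ r)) / (b - a) ≤ 0 := by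
    rw [← this]; exact hd
  have := (div_nonpos_iff.1 h2)
  rcases this with ⟨h3, _⟩ | ⟨h3, h4⟩
  · linarith
  · linarith

/-- minus covariance coefficient at lag `d+1` in units of `δ^r`. -/
noncomputable def kap (r : ℝ) (d : ℕ) : ℝ :=
  (2 * (2 * (d:ℝ) + 2) ^ r - (2 * (d:ℝ) + 3) ^ r - (2 * (d:ℝ) + 1) ^ r) / 2

lemma kap_zero_le {r : ℝ} (hr0 : 0 < r) (hr1 : r < 1) : kap r 0 ≤ 1 / 8 := by
  have h := kappa_le hr0 hr1 (le_refl 1)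
  rw [Real.one_rpow] at h
  have h2 : (1:ℝ) ^ (r - 2) = 1 := Real.one_rpow _
  rw [h2, mul_one] at h
  have h3 : r * (1 - r) ≤ 1 / 4 := by nlinarith [sq_nonneg (1 - 2*r)]
  have e1 : ((1:ℝ) + 1) = 2 := by norm_num
  have e2 : ((1:ℝ) + 2) = 3 := by norm_num
  rw [e1, e2] at h
  have hk : kap r 0 = (2 * (2:ℝ) ^ r - (3:ℝ) ^ r - 1) / 2 := by
    unfold kap
    norm_num
  rw [hk]
  linarith

lemma kap_succ_le {r : ℝ} (hr0 : 0 < r) (hr1 : r < 1) (d : ℕ) :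
    kap r (d + 1) ≤ r / 4 * ((2 * (d:ℝ) + 1) ^ (r - 1) - (2 * (d:ℝ) + 3) ^ (r - 1)) := by
  have hd0 : (0:ℝ) ≤ (d:ℝ) := Nat.cast_nonneg d
  have hx : (1:ℝ) ≤ 2 * (d:ℝ) + 3 := by linarith
  have h1 := kappa_le hr0 hr1 hx
  have h2 := tail_pair (a := 2 * (d:ℝ) + 1) (b := 2 * (d:ℝ) + 3) hr1 (by positivity) (by linarith)
  have e1 : (2 * (d:ℝ) + 3) + 1 = 2 * (d:ℝ) + 4 := by ring
  have e2 : (2 * (d:ℝ) + 3) + 2 = 2 * (d:ℝ) + 5 := by ring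
  rw [e1, e2] at h1
  have e3 : (2 * (d:ℝ) + 3) - (2 * (d:ℝ) + 1) = 2 := by ring
  rw [e3] at h2
  have hk : kap r (d + 1) = (2 * (2 * (d:ℝ) + 4) ^ r - (2 * (d:ℝ) + 5) ^ r - (2 * (d:ℝ) + 3) ^ r) / 2 := by
    unfold kap; push_cast; ring_nf
  rw [hk]
  nlinarith [h1, h2, hr0.le]

lemma kapSum_le {r : ℝ} (hr0 : 0 < r) (hr1 : r < 1) (m : ℕ) :
    ∑ d ∈ Finset.range m, kap r d ≤ 3 / 8 := by
  rcases Nat.eq_zero_or_pos m with hm | hm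
  · subst hm; norm_num
  obtain ⟨M, rfl⟩ : ∃ M, m = M + 1 := ⟨m - 1, by omega⟩
  rw [Finset.sum_range_succ']
  have h1 : ∑ i ∈ Finset.range M, kap r (i + 1)
      ≤ ∑ i ∈ Finset.range M, (r / 4) * ((2 * (i:ℝ) + 1) ^ (r - 1) - (2 * ((i:ℝ) + 1) + 1) ^ (r - 1)) := by
    refine Finset.sum_le_sum fun i _ => ?_
    have := kap_succ_le hr0 hr1 i
    have e : 2 * ((i:ℝ) + 1) + 1 = 2 * (i:ℝ) + 3 := by ring
    rw [e]
    exact this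
  have h2 : ∑ i ∈ Finset.range M, (r / 4) * ((2 * (i:ℝ) + 1) ^ (r - 1) - (2 * ((i:ℝ) + 1) + 1) ^ (r - 1))
      = (r / 4) * ((2 * (0:ℝ) + 1) ^ (r - 1) - (2 * (M:ℝ) + 1) ^ (r - 1)) := by
    rw [← Finset.mul_sum]
    congr 1
    have := Finset.sum_range_sub' (fun i : ℕ => (2 * (i:ℝ) + 1) ^ (r - 1)) M
    push_cast at this ⊢
    convert this using 2
  have h3 : (2 * (0:ℝ) + 1) ^ (r - 1) = 1 := by norm_num
  have h4 : (0:ℝ) ≤ (2 * (M:ℝ) + 1) ^ (r - 1) := Real.rpow_nonneg (by positivity) _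
  have h5 : (r / 4) * ((2 * (0:ℝ) + 1) ^ (r - 1) - (2 * (M:ℝ) + 1) ^ (r - 1)) ≤ r / 4 := by
    rw [h3]
    nlinarith
  have h0 := kap_zero_le hr0 hr1
  calc (∑ i ∈ Finset.range M, kap r (i + 1)) + kap r 0
      ≤ r / 4 + 1 / 8 := by linarith [h1.trans (le_of_eq h2) |>.trans h5]
    _ ≤ 3 / 8 := by nlinarith

lemma cterm (H x y z w : ℝ) :
    fbmCov H x z + fbmCov H y w - fbmCov H x w - fbmCov H y z
      = (|w - x| ^ (2*H) + |z - y| ^ (2*H) - |z - x| ^ (2*H) - |w - y| ^ (2*H)) / 2 := by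
  unfold fbmCov; ring

lemma integral_sq_eq_Q {Ω : Type*} [MeasurableSpace Ω] (P : MeasureTheory.Measure Ω)
    (H : ℝ) (W : ℝ → Ω → ℝ) (hW : IsFractionalBM P H W) {n : ℕ}
    (u v : Fin n → ℝ) (hu : ∀ i, 0 ≤ u i) (hv : ∀ i, 0 ≤ v i) :
    ∫ ω, (∑ i, (W (v i) ω - W (u i) ω)) ^ 2 ∂P
      = ((Real.toNNReal (∑ i, ∑ j, (fbmCov H (u i) (u j) + fbmCov H (v i) (v j)
          - fbmCov H (u i) (v j) - fbmCov H (v i) (u j)))) : ℝ) := by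
  classical
  set p : Fin (n+n) → ℝ := Fin.append u v with hp_def
  set a : Fin (n+n) → ℝ := Fin.append (fun _ => (-1:ℝ)) (fun _ => (1:ℝ)) with ha_def
  have hp : ∀ k, 0 ≤ p k := by
    intro k
    refine Fin.addCases (motive := fun k => 0 ≤ p k) ?_ ?_ k
    · intro i; simp only [hp_def, Fin.append_left]; exact hu i
    · intro i; simp only [hp_def, Fin.append_right]; exact hv i
  have hmap := hW.gaussian (n+n) p a hp
  have hfun : ∀ ω, (∑ k, a k * W (p k) ω) = ∑ i, (W (v i) ω - W (u i) ω) := by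
    intro ω
    rw [Fin.sum_univ_add]
    simp only [hp_def, ha_def, Fin.append_left, Fin.append_right, neg_one_mul, one_mul]
    rw [Finset.sum_sub_distrib, Finset.sum_neg_distrib]
    ring
  have hmeas : Measurable fun ω => ∑ k, a k * W (p k) ω :=
    Finset.measurable_sum _ fun k _ => ((hW.measurable (p k)).const_mul (a k))
  have hQ : (∑ k, ∑ l, a k * a l * fbmCov H (p k) (p l))
      = ∑ i : Fin n, ∑ j : Fin n, (fbmCov H (u i) (u j) + fbmCov H (v i) (v j)
          - fbmCov H (u i) (v j) - fbmCov H (v i) (u j)) := by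
    rw [Fin.sum_univ_add]
    simp only [hp_def, ha_def, Fin.append_left, Fin.append_right, Fin.sum_univ_add,
      neg_one_mul, one_mul, neg_neg, neg_mul]
    rw [← Finset.sum_add_distrib]
    refine Finset.sum_congr rfl fun i _ => ?_
    simp only [Finset.sum_add_distrib, Finset.sum_sub_distrib, Finset.sum_neg_distrib]
    ring
  calc ∫ ω, (∑ i, (W (v i) ω - W (u i) ω)) ^ 2 ∂P
      = ∫ ω, (∑ k, a k * W (p k) ω) ^ 2 ∂P := by
        refine MeasureTheory.integral_congr_ae (Filter.Eventually.of_forall fun ω => ?_)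
        simp only [hfun]
    _ = ∫ x, x ^ 2 ∂(Measure.map (fun ω => ∑ k, a k * W (p k) ω) P) := by
        rw [MeasureTheory.integral_map (f := fun x : ℝ => x ^ 2) hmeas.aemeasurable
          ((measurable_id.pow_const 2).aestronglyMeasurable)]
    _ = _ := by rw [hmap, integral_sq_gaussianReal, hQ]


lemma sum_rpow_le_card_mul {r : ℝ} (hr0 : 0 < r) (hr1 : r < 1) {n : ℕ} (hn : 1 ≤ n)
    (x : Fin n → ℝ) (hx : ∀ i, 0 ≤ x i) :
    ∑ i, x i ^ r ≤ (n:ℝ) ^ (1 - r) * (∑ i, x i) ^ r := by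
  have hnpos : (0:ℝ) < n := by exact_mod_cast hn
  have hw : ∀ i ∈ Finset.univ (α := Fin n), (0:ℝ) ≤ 1 / n := fun _ _ => by positivity
  have hw' : ∑ _i : Fin n, (1:ℝ) / n = 1 := by
    rw [Finset.sum_const, Finset.card_univ, Fintype.card_fin, nsmul_eq_mul]
    field_simp
  have hz : ∀ i ∈ Finset.univ (α := Fin n), (0:ℝ) ≤ x i ^ r :=
    fun i _ => Real.rpow_nonneg (hx i) _
  have hp : (1:ℝ) ≤ 1 / r := by rw [le_div_iff₀ hr0]; linarith
  have key := Real.rpow_arith_mean_le_arith_mean_rpow Finset.univ (fun _ => 1 / n)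
    (fun i => x i ^ r) hw hw' hz hp
  have hxr : ∀ i : Fin n, (x i ^ r) ^ (1/r : ℝ) = x i := by
    intro i
    rw [← Real.rpow_mul (hx i), mul_one_div, div_self (ne_of_gt hr0), Real.rpow_one]
  simp_rw [hxr] at key
  -- key : (∑ 1/n * x i ^ r) ^ (1/r) ≤ ∑ 1/n * x i
  set A : ℝ := ∑ i, 1 / (n:ℝ) * x i ^ r with hA
  have hA0 : 0 ≤ A := Finset.sum_nonneg fun i _ =>
    mul_nonneg (by positivity) (Real.rpow_nonneg (hx i) _)
  have h2 : A ≤ (∑ i, 1 / (n:ℝ) * x i) ^ r := by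
    have h3 : (A ^ (1/r:ℝ)) ^ r ≤ (∑ i, 1 / (n:ℝ) * x i) ^ r :=
      Real.rpow_le_rpow (Real.rpow_nonneg hA0 _) key hr0.le
    rwa [← Real.rpow_mul hA0, one_div, inv_mul_cancel₀ (ne_of_gt hr0), Real.rpow_one] at h3
  have hsum0 : 0 ≤ ∑ i, x i := Finset.sum_nonneg fun i _ => hx i
  have e1 : ∑ i, 1 / (n:ℝ) * x i = (1/n) * ∑ i, x i := by rw [Finset.mul_sum]
  have e2 : A = (1/(n:ℝ)) * ∑ i, x i ^ r := by rw [hA, Finset.mul_sum]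
  rw [e1] at h2
  rw [Real.mul_rpow (show (0:ℝ) ≤ 1/(n:ℝ) by positivity) hsum0] at h2
  have h4 : ∑ i, x i ^ r = (n:ℝ) * A := by rw [e2]; field_simp
  rw [h4]
  have h5 : (n:ℝ) * A ≤ (n:ℝ) * ((1/(n:ℝ)) ^ r * (∑ i, x i) ^ r) :=
    mul_le_mul_of_nonneg_left h2 hnpos.le
  refine h5.trans (le_of_eq ?_)
  rw [one_div, ← Real.rpow_neg_one (n:ℝ), ← Real.rpow_mul hnpos.le]
  nth_rewrite 1 [← Real.rpow_one (n:ℝ)]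
  rw [← mul_assoc, ← Real.rpow_add hnpos, show (1:ℝ) + -1 * r = 1 - r by ring]

lemma sum_lengths_le {n : ℕ} (hn : 1 ≤ n) (u v : Fin n → ℝ) (S : ℝ)
    (hu0 : ∀ i, 0 ≤ u i) (huv : ∀ i, u i < v i) (hvS : ∀ i, v i ≤ S)
    (hc : ∀ i j : Fin n, i < j → v i < u j) : ∑ i, (v i - u i) ≤ S := by
  classical
  set U : ℕ → ℝ := fun k => if h : k < n then u ⟨k, h⟩ else 0 with hU
  set V : ℕ → ℝ := fun k => if h : k < n then v ⟨k, h⟩ else 0 with hV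
  have claim : ∀ k, k < n → ∑ i ∈ Finset.range (k+1), (V i - U i) ≤ V k - U 0 := by
    intro k
    induction k with
    | zero => intro h; simp
    | succ m ih =>
      intro h
      have hm : m < n := by omega
      rw [Finset.sum_range_succ]
      have hlink : V m ≤ U (m+1) := by
        have := hc ⟨m, hm⟩ ⟨m+1, h⟩ (by simp [Fin.mk_lt_mk])
        simp only [hU, hV, dif_pos hm, dif_pos h] at *
        exact le_of_lt this
      have := ih hm
      linarith
  have hfin : ∑ i : Fin n, (v i - u i) = ∑ i ∈ Finset.range n, (V i - U i) := by
    rw [← Fin.sum_univ_eq_sum_range (fun k => V k - U k) n]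
    refine Finset.sum_congr rfl fun i _ => ?_
    simp only [hU, hV, dif_pos i.isLt, Fin.eta]
  rw [hfin]
  have hn1 : n - 1 < n := by omega
  have h2 : ∑ i ∈ Finset.range n, (V i - U i) ≤ V (n-1) - U 0 := by
    have := claim (n-1) hn1
    rwa [show n - 1 + 1 = n by omega] at this
  have h3 : V (n-1) ≤ S := by simp only [hV, dif_pos hn1]; exact hvS _
  have h4 : 0 ≤ U 0 := by
    have h0n : 0 < n := hn
    simp only [hU, dif_pos h0n]; exact hu0 _
  linarith

lemma fbmCov_symm (H s t : ℝ) : fbmCov H s t = fbmCov H t s := by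
  unfold fbmCov; rw [abs_sub_comm]; ring

lemma Q_upper {H : ℝ} (hH0 : 0 < H) (hH : H < 1/2) {n : ℕ} (hn : 1 ≤ n) {S : ℝ} (hS : 0 < S)
    (u v : Fin n → ℝ) (hu0 : ∀ i, 0 ≤ u i) (huv : ∀ i, u i < v i) (hvS : ∀ i, v i ≤ S)
    (hc : ∀ i j : Fin n, i < j → v i < u j) :
    (∑ i, ∑ j, (fbmCov H (u i) (u j) + fbmCov H (v i) (v j)
        - fbmCov H (u i) (v j) - fbmCov H (v i) (u j)))
      ≤ (n:ℝ) ^ (1 - 2*H) * S ^ (2*H) := by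
  classical
  set r : ℝ := 2 * H with hr
  have hr0 : 0 < r := by rw [hr]; linarith
  have hr1 : r < 1 := by rw [hr]; linarith
  set term : Fin n → Fin n → ℝ := fun i j => fbmCov H (u i) (u j) + fbmCov H (v i) (v j)
      - fbmCov H (u i) (v j) - fbmCov H (v i) (u j) with hterm
  have hdiag : ∀ i, term i i = (v i - u i) ^ r := by
    intro i
    rw [hterm]
    simp only
    rw [cterm, abs_sub_comm (u i) (v i), abs_of_pos (sub_pos.2 (huv i))]
    simp only [sub_self, abs_zero, Real.zero_rpow (ne_of_gt hr0)]
    rw [← hr]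
    rw [Real.zero_rpow (ne_of_gt hr0)]
    ring
  have hoff : ∀ i j, i < j → term i j ≤ 0 := by
    intro i j hij
    have h1 : u i < v i := huv i
    have h2 : v i < u j := hc i j hij
    have h3 : u j < v j := huv j
    rw [hterm]
    simp only
    rw [cterm, ← hr]
    rw [abs_of_pos (by linarith : (0:ℝ) < v j - u i),
      abs_of_pos (by linarith : (0:ℝ) < u j - v i),
      abs_of_pos (by linarith : (0:ℝ) < u j - u i),
      abs_of_pos (by linarith : (0:ℝ) < v j - v i)]
    have key := sub_rpow_le (r := r) (L := v j - u j) (a := u j - v i) (b := u j - u i)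
      hr0 hr1 (by linarith) (by linarith) (by linarith)
    rw [show u j - u i + (v j - u j) = v j - u i by ring,
      show u j - v i + (v j - u j) = v j - v i by ring] at key
    linarith
  have hsym : ∀ i j, term i j = term j i := by
    intro i j
    rw [hterm]
    simp only
    rw [fbmCov_symm H (u j) (u i), fbmCov_symm H (v j) (v i),
      fbmCov_symm H (u j) (v i), fbmCov_symm H (v j) (u i)]
    ring
  have hrow : ∀ i, ∑ j, term i j ≤ term i i := by
    intro i
    rw [← Finset.sum_erase_add Finset.univ _ (Finset.mem_univ i)]
    have hneg : ∑ j ∈ Finset.univ.erase i, term i j ≤ 0 := by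
      refine Finset.sum_nonpos fun j hj => ?_
      have hji : j ≠ i := Finset.ne_of_mem_erase hj
      rcases hji.lt_or_gt with h | h
      · rw [hsym]; exact hoff j i h
      · exact hoff i j h
    linarith
  have step1 : (∑ i, ∑ j, term i j) ≤ ∑ i, (v i - u i) ^ r := by
    refine (Finset.sum_le_sum fun i _ => hrow i).trans (le_of_eq ?_)
    exact Finset.sum_congr rfl fun i _ => hdiag i
  have step2 := sum_rpow_le_card_mul hr0 hr1 hn (fun i => v i - u i)
    (fun i => le_of_lt (sub_pos.2 (huv i)))
  have step3 : (∑ i, (v i - u i)) ^ r ≤ S ^ r :=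
    Real.rpow_le_rpow (Finset.sum_nonneg fun i _ => le_of_lt (sub_pos.2 (huv i)))
      (sum_lengths_le hn u v S hu0 huv hvS hc) hr0.le
  have hnr : (0:ℝ) ≤ (n:ℝ) ^ (1 - r) := Real.rpow_nonneg (Nat.cast_nonneg n) _
  calc (∑ i, ∑ j, term i j) ≤ ∑ i, (v i - u i) ^ r := step1
    _ ≤ (n:ℝ) ^ (1 - r) * (∑ i, (v i - u i)) ^ r := step2
    _ ≤ (n:ℝ) ^ (1 - r) * S ^ r := mul_le_mul_of_nonneg_left step3 hnr

noncomputable def Ufun (S : ℝ) (n : ℕ) (k : ℕ) : ℝ := 2 * k * (S / (2 * n))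
noncomputable def Vfun (S : ℝ) (n : ℕ) (k : ℕ) : ℝ := (2 * k + 1) * (S / (2 * n))

lemma Q_lower {H : ℝ} (hH0 : 0 < H) (hH : H < 1/2) {n : ℕ} (hn : 1 ≤ n) {S : ℝ} (hS : 0 < S) :
    1/8 * (n:ℝ) ^ (1 - 2*H) * S ^ (2*H) ≤
      ∑ i : Fin n, ∑ j : Fin n,
        (fbmCov H (Ufun S n ↑i) (Ufun S n ↑j) + fbmCov H (Vfun S n ↑i) (Vfun S n ↑j)
          - fbmCov H (Ufun S n ↑i) (Vfun S n ↑j) - fbmCov H (Vfun S n ↑i) (Ufun S n ↑j)) := by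
  classical
  set r : ℝ := 2 * H with hr
  have hr0 : 0 < r := by rw [hr]; linarith
  have hr1 : r < 1 := by rw [hr]; linarith
  have hnpos : (0:ℝ) < n := by exact_mod_cast hn
  set δ : ℝ := S / (2 * n) with hδdef
  have hδ : 0 < δ := by rw [hδdef]; positivity
  set G : ℕ → ℕ → ℝ := fun a b => fbmCov H (Ufun S n a) (Ufun S n b)
      + fbmCov H (Vfun S n a) (Vfun S n b) - fbmCov H (Ufun S n a) (Vfun S n b)
      - fbmCov H (Vfun S n a) (Ufun S n b) with hG
  -- diagonal value
  have hGdiag : ∀ a : ℕ, G a a = δ ^ r := by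
    intro a
    rw [hG]
    simp only
    rw [cterm, ← hr]
    have e : Vfun S n a - Ufun S n a = δ := by unfold Vfun Ufun; rw [hδdef]; ring
    rw [e, abs_sub_comm (Ufun S n a) (Vfun S n a), e, abs_of_pos hδ]
    simp only [sub_self, abs_zero, Real.zero_rpow (ne_of_gt hr0)]
    ring
  -- off-diagonal values
  have hGoff : ∀ a b : ℕ, a < b → G a b = -(δ ^ r * kap r (b - a - 1)) := by
    intro a b hab
    obtain ⟨d, rfl⟩ : ∃ d, b = a + d + 1 := ⟨b - a - 1, by omega⟩
    rw [show a + d + 1 - a - 1 = d by omega]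
    rw [hG]
    simp only
    rw [cterm, ← hr]
    have e1 : Vfun S n (a+d+1) - Ufun S n a = (2*(d:ℝ)+3) * δ := by
      unfold Vfun Ufun; rw [hδdef]; push_cast; ring
    have e2 : Ufun S n (a+d+1) - Vfun S n a = (2*(d:ℝ)+1) * δ := by
      unfold Vfun Ufun; rw [hδdef]; push_cast; ring
    have e3 : Ufun S n (a+d+1) - Ufun S n a = (2*(d:ℝ)+2) * δ := by
      unfold Ufun; rw [hδdef]; push_cast; ring
    have e4 : Vfun S n (a+d+1) - Vfun S n a = (2*(d:ℝ)+2) * δ := by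
      unfold Vfun; rw [hδdef]; push_cast; ring
    have hd0 : (0:ℝ) ≤ (d:ℝ) := Nat.cast_nonneg d
    rw [e1, e2, e3, e4,
      abs_of_pos (by nlinarith : (0:ℝ) < (2*(d:ℝ)+3) * δ),
      abs_of_pos (by nlinarith : (0:ℝ) < (2*(d:ℝ)+1) * δ),
      abs_of_pos (by nlinarith : (0:ℝ) < (2*(d:ℝ)+2) * δ),
      Real.mul_rpow (by linarith) hδ.le, Real.mul_rpow (by linarith) hδ.le,
      Real.mul_rpow (by linarith) hδ.le]
    unfold kap
    ring
  have hGsym : ∀ a b : ℕ, G a b = G b a := by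
    intro a b
    rw [hG]
    simp only
    rw [fbmCov_symm H (Ufun S n b) (Ufun S n a), fbmCov_symm H (Vfun S n b) (Vfun S n a),
      fbmCov_symm H (Ufun S n b) (Vfun S n a), fbmCov_symm H (Vfun S n b) (Ufun S n a)]
    ring
  -- row bound
  have hrow : ∀ i, i < n → δ ^ r / 4 ≤ ∑ j ∈ Finset.range n, G i j := by
    intro i hi
    have hsplit := Finset.sum_range_add (G i) (i+1) (n-1-i)
    rw [show i + 1 + (n-1-i) = n by omega] at hsplit
    rw [hsplit, Finset.sum_range_succ]
    have hleft : -(δ ^ r * (3/8)) ≤ ∑ j ∈ Finset.range i, G i j := by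
      have e : ∀ j ∈ Finset.range i, G i j = -(δ ^ r * kap r (i - 1 - j)) := by
        intro j hj
        have hji : j < i := Finset.mem_range.1 hj
        rw [hGsym, hGoff j i hji, show i - j - 1 = i - 1 - j by omega]
      rw [Finset.sum_congr rfl e, Finset.sum_range_reflect (fun d => -(δ ^ r * kap r d)) i]
      rw [Finset.sum_neg_distrib, ← Finset.mul_sum]
      have := kapSum_le hr0 hr1 i
      have hd : (0:ℝ) ≤ δ ^ r := Real.rpow_nonneg hδ.le _
      nlinarith
    have hright : -(δ ^ r * (3/8)) ≤ ∑ k ∈ Finset.range (n-1-i), G i (i + 1 + k) := by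
      have e : ∀ k ∈ Finset.range (n-1-i), G i (i+1+k) = -(δ ^ r * kap r k) := by
        intro k _
        rw [hGoff i (i+1+k) (by omega), show i + 1 + k - i - 1 = k by omega]
      rw [Finset.sum_congr rfl e, Finset.sum_neg_distrib, ← Finset.mul_sum]
      have := kapSum_le hr0 hr1 (n-1-i)
      have hd : (0:ℝ) ≤ δ ^ r := Real.rpow_nonneg hδ.le _
      nlinarith
    have hdiag := hGdiag i
    rw [hdiag]
    linarith
  -- convert Fin sums to range sums
  have hconv : (∑ i : Fin n, ∑ j : Fin n,
        (fbmCov H (Ufun S n ↑i) (Ufun S n ↑j) + fbmCov H (Vfun S n ↑i) (Vfun S n ↑j)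
          - fbmCov H (Ufun S n ↑i) (Vfun S n ↑j) - fbmCov H (Vfun S n ↑i) (Ufun S n ↑j)))
      = ∑ i ∈ Finset.range n, ∑ j ∈ Finset.range n, G i j := by
    rw [← Fin.sum_univ_eq_sum_range (fun i => ∑ j ∈ Finset.range n, G i j) n]
    refine Finset.sum_congr rfl fun i _ => ?_
    rw [← Fin.sum_univ_eq_sum_range (fun j => G ↑i j) n]
  rw [hconv]
  have hQ : (n:ℝ) * (δ ^ r / 4) ≤ ∑ i ∈ Finset.range n, ∑ j ∈ Finset.range n, G i j := by
    calc (n:ℝ) * (δ ^ r / 4) = ∑ _i ∈ Finset.range n, δ ^ r / 4 := by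
          rw [Finset.sum_const, Finset.card_range, nsmul_eq_mul]
      _ ≤ _ := Finset.sum_le_sum fun i hi => hrow i (Finset.mem_range.1 hi)
  refine le_trans ?_ hQ
  -- final algebra: 1/8 n^{1-r} S^r ≤ n δ^r / 4
  have hδr : δ ^ r = S ^ r / ((2:ℝ) ^ r * (n:ℝ) ^ r) := by
    rw [hδdef, Real.div_rpow hS.le (by positivity), Real.mul_rpow (by norm_num) hnpos.le]
  have h2r : (2:ℝ) ^ r ≤ 2 := by
    calc (2:ℝ) ^ r ≤ (2:ℝ) ^ (1:ℝ) := Real.rpow_le_rpow_of_exponent_le one_le_two hr1.le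
      _ = 2 := Real.rpow_one 2
  have h2rpos : (0:ℝ) < (2:ℝ) ^ r := Real.rpow_pos_of_pos two_pos r
  have hnrpos : (0:ℝ) < (n:ℝ) ^ r := Real.rpow_pos_of_pos hnpos r
  have h1mr : (n:ℝ) ^ (1 - r) = (n:ℝ) / (n:ℝ) ^ r := by
    rw [Real.rpow_sub hnpos, Real.rpow_one]
  have hSr : (0:ℝ) ≤ S ^ r := Real.rpow_nonneg hS.le _
  rw [hδr, h1mr]
  rw [show (1:ℝ)/8 * ((n:ℝ)/(n:ℝ)^r) * S ^ r = ((n:ℝ) * S ^ r) / (8 * (n:ℝ)^r) by ring,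
      show (n:ℝ) * (S ^ r / ((2:ℝ)^r * (n:ℝ)^r) / 4) = ((n:ℝ) * S ^ r) / (4 * (2:ℝ)^r * (n:ℝ)^r) by ring]
  refine div_le_div_of_nonneg_left (by positivity) (by positivity) ?_
  nlinarith [hnrpos, h2r]

/-- For `H ∈ (0,1/2)`: `(1/8)·n^{1-2H}·S^{2H} ≤ V_n(W^H,S) ≤ n^{1-2H}·S^{2H}`. -/
theorem weakVar_bounds_small_H
    {Ω : Type*} [MeasurableSpace Ω] (P : Measure Ω) [IsProbabilityMeasure P]
    (H : ℝ) (hH0 : 0 < H) (hH : H < 1 / 2)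
    (W : ℝ → Ω → ℝ) (hW : IsFractionalBM P H W)
    (S : ℝ) (hS : 0 < S) (n : ℕ) (hn : 1 ≤ n) :
    1 / 8 * (n : ℝ) ^ (1 - 2 * H) * S ^ (2 * H) ≤ weakVar P W n S ∧
    weakVar P W n S ≤ (n : ℝ) ^ (1 - 2 * H) * S ^ (2 * H) := by
  classical
  have hB0 : (0:ℝ) ≤ (n : ℝ) ^ (1 - 2 * H) * S ^ (2 * H) :=
    mul_nonneg (Real.rpow_nonneg (Nat.cast_nonneg n) _) (Real.rpow_nonneg hS.le _)
  have hub : ∀ x ∈ {x : ℝ | ∃ u v : Fin n → ℝ,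
      (∀ i, 0 ≤ u i) ∧ (∀ i, u i < v i) ∧ (∀ i, v i ≤ S) ∧
      (∀ i j : Fin n, i < j → v i < u j) ∧
      x = ∫ ω, (∑ i, (W (v i) ω - W (u i) ω)) ^ 2 ∂P},
      x ≤ (n : ℝ) ^ (1 - 2 * H) * S ^ (2 * H) := by
    rintro x ⟨u, v, hu0, huv, hvS, hc, rfl⟩
    have hv0 : ∀ i, 0 ≤ v i := fun i => (hu0 i).trans (huv i).le
    rw [integral_sq_eq_Q P H W hW u v hu0 hv0, Real.coe_toNNReal']
    exact max_le (Q_upper hH0 hH hn hS u v hu0 huv hvS hc) hB0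
  constructor
  · -- lower bound
    set u : Fin n → ℝ := fun i => Ufun S n ↑i with hu
    set v : Fin n → ℝ := fun i => Vfun S n ↑i with hv
    have hnpos : (0:ℝ) < n := by exact_mod_cast hn
    have hδ : (0:ℝ) < S / (2 * n) := by positivity
    have h1 : ∀ i, 0 ≤ u i := by
      intro i; rw [hu]; unfold Ufun; positivity
    have h2 : ∀ i, u i < v i := by
      intro i; rw [hu, hv]; unfold Ufun Vfun; nlinarith [hδ]
    have h3 : ∀ i, v i ≤ S := by
      intro i
      rw [hv]; unfold Vfun
      have hi : ((i:ℕ):ℝ) ≤ (n:ℝ) - 1 := by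
        have := i.isLt
        have : ((i:ℕ):ℝ) + 1 ≤ (n:ℝ) := by exact_mod_cast this
        linarith
      have key : (2 * ((i:ℕ):ℝ) + 1) ≤ 2 * (n:ℝ) := by linarith
      calc (2 * ((i:ℕ):ℝ) + 1) * (S / (2 * n)) ≤ 2 * (n:ℝ) * (S / (2 * n)) :=
            mul_le_mul_of_nonneg_right key hδ.le
        _ = S := by field_simp
    have h4 : ∀ i j : Fin n, i < j → v i < u j := by
      intro i j hij
      rw [hu, hv]; unfold Ufun Vfun
      have : ((i:ℕ):ℝ) + 1 ≤ ((j:ℕ):ℝ) := by exact_mod_cast Fin.lt_def.1 hij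
      nlinarith [hδ]
    have hmem : (∫ ω, (∑ i, (W (v i) ω - W (u i) ω)) ^ 2 ∂P) ∈ {x : ℝ | ∃ u v : Fin n → ℝ,
        (∀ i, 0 ≤ u i) ∧ (∀ i, u i < v i) ∧ (∀ i, v i ≤ S) ∧
        (∀ i j : Fin n, i < j → v i < u j) ∧
        x = ∫ ω, (∑ i, (W (v i) ω - W (u i) ω)) ^ 2 ∂P} :=
      ⟨u, v, h1, h2, h3, h4, rfl⟩
    have hbdd : BddAbove {x : ℝ | ∃ u v : Fin n → ℝ,
        (∀ i, 0 ≤ u i) ∧ (∀ i, u i < v i) ∧ (∀ i, v i ≤ S) ∧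
        (∀ i j : Fin n, i < j → v i < u j) ∧
        x = ∫ ω, (∑ i, (W (v i) ω - W (u i) ω)) ^ 2 ∂P} :=
      ⟨(n : ℝ) ^ (1 - 2 * H) * S ^ (2 * H), hub⟩
    have hx0 : 1 / 8 * (n : ℝ) ^ (1 - 2 * H) * S ^ (2 * H)
        ≤ ∫ ω, (∑ i, (W (v i) ω - W (u i) ω)) ^ 2 ∂P := by
      rw [integral_sq_eq_Q P H W hW u v h1 (fun i => (h1 i).trans (h2 i).le),
        Real.coe_toNNReal']
      refine le_trans ?_ (le_max_left _ _)
      exact Q_lower hH0 hH hn hS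
    exact hx0.trans (le_csSup hbdd hmem)
  · exact Real.sSup_le hub hB0

end
end

section
/- Let H ∈ [1/2,1), S > 0 and n ≥ 1 an integer. Then the weak variance V_n(W^H,S) := sup over 0 ≤ s_1 < t_1 < s_2 < t_2 < … < s_n < t_n ≤ S of E[(Σ_{i=1}^n (W^H_{t_i} − W^H_{s_i}))²] equals S^{2H}. -/
open MeasureTheory ProbabilityTheory Filter Asymptotics
open scoped NNReal ENNReal

noncomputable section

/-! ### Auxiliary results: second moment of the Gaussian distribution -/

lemma aux_integrable_sq_mul_exp_neg_mul_sq {b : ℝ} (hb : 0 < b) :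
    Integrable fun x : ℝ => x ^ 2 * Real.exp (-b * x ^ 2) := by
  have := integrable_rpow_mul_exp_neg_mul_sq hb (s := 2) (by norm_num)
  simpa [Real.rpow_natCast] using this

lemma aux_tendsto_mul_exp_neg_mul_sq_atTop {b : ℝ} (hb : 0 < b) :
    Tendsto (fun x : ℝ => x * Real.exp (-b * x ^ 2)) atTop (nhds 0) := by
  have h := rpow_mul_exp_neg_mul_sq_isLittleO_exp_neg hb 1
  have hhalf : Tendsto (fun x : ℝ => (1/2 : ℝ) * x) atTop atTop :=
    Tendsto.const_mul_atTop (by norm_num) tendsto_id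
  have h2 : Tendsto (fun x : ℝ => Real.exp (-(1/2 : ℝ) * x)) atTop (nhds 0) := by
    have := Real.tendsto_exp_atBot.comp (tendsto_neg_atTop_atBot.comp hhalf)
    refine this.congr fun x => ?_
    simp only [Function.comp]
    ring_nf
  have h3 := h.trans_tendsto h2
  refine h3.congr' ?_
  filter_upwards [eventually_gt_atTop 0] with x hx
  rw [Real.rpow_one]

lemma aux_integral_sq_mul_exp_neg_mul_sq {b : ℝ} (hb : 0 < b) :
    ∫ x : ℝ, x ^ 2 * Real.exp (-b * x ^ 2) = Real.sqrt (Real.pi / b) / (2 * b) := by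
  have hderiv : ∀ x : ℝ, HasDerivAt (fun x : ℝ => -(x * Real.exp (-b * x ^ 2)) / (2 * b))
      (x ^ 2 * Real.exp (-b * x ^ 2) - Real.exp (-b * x ^ 2) / (2 * b)) x := by
    intro x
    have h1 : HasDerivAt (fun x : ℝ => -b * x ^ 2) (-b * (2 * x)) x := by
      simpa using ((hasDerivAt_pow 2 x).const_mul (-b))
    have h2 := ((hasDerivAt_id x).mul h1.exp).neg.div_const (2 * b)
    refine h2.congr_deriv ?_
    simp only [id]
    field_simp
    ring
  have hint : Integrable fun x : ℝ =>
      x ^ 2 * Real.exp (-b * x ^ 2) - Real.exp (-b * x ^ 2) / (2 * b) :=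
    (aux_integrable_sq_mul_exp_neg_mul_sq hb).sub ((integrable_exp_neg_mul_sq hb).div_const _)
  have htop : Tendsto (fun x : ℝ => -(x * Real.exp (-b * x ^ 2)) / (2 * b)) atTop (nhds 0) := by
    have := ((aux_tendsto_mul_exp_neg_mul_sq_atTop hb).neg).div_const (2 * b)
    simpa using this
  have hbot : Tendsto (fun x : ℝ => -(x * Real.exp (-b * x ^ 2)) / (2 * b)) atBot (nhds 0) := by
    have h0 := ((aux_tendsto_mul_exp_neg_mul_sq_atTop hb).div_const (2 * b)).comp
      tendsto_neg_atBot_atTop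
    rw [zero_div] at h0
    refine h0.congr fun x => ?_
    simp only [Function.comp]
    rw [neg_sq]
    ring
  have h0 := MeasureTheory.integral_of_hasDerivAt_of_tendsto hderiv hint hbot htop
  rw [sub_zero] at h0
  have hsplit := integral_sub (aux_integrable_sq_mul_exp_neg_mul_sq hb)
    ((integrable_exp_neg_mul_sq hb).div_const (2 * b))
  rw [hsplit] at h0
  have hg : ∫ x : ℝ, Real.exp (-b * x ^ 2) / (2 * b) = Real.sqrt (Real.pi / b) / (2 * b) := by
    rw [integral_div, integral_gaussian]
  linarith [h0, hg]

lemma aux_integral_sq_gaussianReal (v : ℝ≥0) :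
    ∫ x, x ^ 2 ∂(gaussianReal 0 v) = v := by
  by_cases hv : v = 0
  · simp [hv, gaussianReal_zero_var]
  · have hvpos : (0 : ℝ) < v := lt_of_le_of_ne v.coe_nonneg (by exact_mod_cast (Ne.symm hv))
    rw [gaussianReal_of_var_ne_zero _ hv]
    have hpdf : gaussianPDF 0 v
        = fun x => ((Real.toNNReal (gaussianPDFReal 0 v x) : ℝ≥0) : ℝ≥0∞) := by
      funext x; rfl
    rw [hpdf, integral_withDensity_eq_integral_smul
      ((measurable_gaussianPDFReal 0 v).real_toNNReal) (fun x => x ^ 2)]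
    have hb : (0:ℝ) < (2 * (v:ℝ))⁻¹ := by positivity
    have hcalc : ∀ x : ℝ, (Real.toNNReal (gaussianPDFReal 0 v x) : ℝ≥0) • x ^ 2
        = (Real.sqrt (2 * Real.pi * v))⁻¹
            * (x ^ 2 * Real.exp (-(2 * (v:ℝ))⁻¹ * x ^ 2)) := by
      intro x
      have hnn : 0 ≤ gaussianPDFReal 0 v x := gaussianPDFReal_nonneg 0 v x
      rw [NNReal.smul_def, smul_eq_mul, Real.coe_toNNReal _ hnn, gaussianPDFReal, sub_zero]
      have harg : -x^2/(2*(v:ℝ)) = -(2*(v:ℝ))⁻¹ * x^2 := by ring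
      rw [harg]; ring
    simp_rw [hcalc]
    rw [integral_const_mul, aux_integral_sq_mul_exp_neg_mul_sq hb]
    have h1 : Real.pi / (2*(v:ℝ))⁻¹ = 2*Real.pi*(v:ℝ) := by field_simp
    have h2 : (2:ℝ) * (2*(v:ℝ))⁻¹ = (v:ℝ)⁻¹ := by field_simp
    rw [h1, h2]
    have hA : Real.sqrt (2*Real.pi*(v:ℝ)) ≠ 0 := ne_of_gt (Real.sqrt_pos.2 (by positivity))
    field_simp

/-! ### Auxiliary results: the increment covariance kernel -/

/-- Covariance of two increments of fractional Brownian motion. -/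
def Kf (H a b c d : ℝ) : ℝ := fbmCov H b d - fbmCov H b c - fbmCov H a d + fbmCov H a c

lemma Kf_formula (H a b c d : ℝ) : Kf H a b c d
    = (|d - a| ^ (2*H) + |c - b| ^ (2*H) - |d - b| ^ (2*H) - |c - a| ^ (2*H)) / 2 := by
  simp only [Kf, fbmCov]; ring

lemma Kf_symm (H a b c d : ℝ) : Kf H a b c d = Kf H c d a b := by
  rw [Kf_formula, Kf_formula, abs_sub_comm d a, abs_sub_comm c b, abs_sub_comm d b,
    abs_sub_comm c a]
  ring

lemma Kf_add_left (H a b e c d : ℝ) : Kf H a b c d + Kf H b e c d = Kf H a e c d := by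
  simp only [Kf]; ring

lemma Kf_diag (H : ℝ) (hH : 2 * H ≠ 0) (a b : ℝ) : Kf H a b a b = |b - a| ^ (2*H) := by
  rw [Kf_formula, abs_sub_comm a b, sub_self, sub_self, abs_zero, Real.zero_rpow hH]
  ring

lemma Kf_self (H a c d : ℝ) : Kf H a a c d = 0 := by simp only [Kf]; ring

lemma aux_rpow_convex_ineq {p x y s t : ℝ} (hp : 1 ≤ p) (hx : 0 ≤ x) (hxs : x ≤ s)
    (hxt : x ≤ t) (hsy : s ≤ y) (hty : t ≤ y) (hsum : x + y = s + t) :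
    s ^ p + t ^ p ≤ x ^ p + y ^ p := by
  rcases eq_or_lt_of_le (hxs.trans hsy) with hxy | hxy
  · have hs : s = x := le_antisymm (by linarith) hxs
    have ht : t = y := by linarith
    rw [hs, ht]
  · set θ : ℝ := (y - s) / (y - x) with hθdef
    have hyx : 0 < y - x := by linarith
    have hθ0 : 0 ≤ θ := div_nonneg (by linarith) hyx.le
    have hθ1 : θ ≤ 1 := (div_le_one hyx).2 (by linarith)
    have hconv := convexOn_rpow hp
    have hxmem : x ∈ Set.Ici (0:ℝ) := hx
    have hymem : y ∈ Set.Ici (0:ℝ) := by simp only [Set.mem_Ici]; linarith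
    have h1 := hconv.2 hxmem hymem hθ0 (by linarith : (0:ℝ) ≤ 1 - θ) (by ring)
    have h2 := hconv.2 hxmem hymem (by linarith : (0:ℝ) ≤ 1 - θ) hθ0 (by ring)
    have hθyx : θ * (y - x) = y - s := div_mul_cancel₀ _ hyx.ne'
    have hes : θ * x + (1 - θ) * y = s := by linear_combination -hθyx
    have het : (1 - θ) * x + θ * y = t := by linear_combination hθyx + hsum
    simp only [smul_eq_mul] at h1 h2
    rw [hes] at h1
    rw [het] at h2
    nlinarith [h1, h2]

lemma Kf_nonneg {H : ℝ} (hp : 1 ≤ 2 * H) {a b c d : ℝ} (hab : a ≤ b) (hbc : b ≤ c)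
    (hcd : c ≤ d) : 0 ≤ Kf H a b c d := by
  rw [Kf_formula]
  have h := aux_rpow_convex_ineq (p := 2*H) (x := c - b) (y := d - a) (s := c - a) (t := d - b)
    hp (by linarith) (by linarith) (by linarith) (by linarith) (by linarith) (by ring)
  rw [abs_of_nonneg (by linarith : (0:ℝ) ≤ d - a), abs_of_nonneg (by linarith : (0:ℝ) ≤ c - b),
    abs_of_nonneg (by linarith : (0:ℝ) ≤ d - b), abs_of_nonneg (by linarith : (0:ℝ) ≤ c - a)]
  linarith

lemma aux_sum_Kf_le {H : ℝ} (hp : 1 ≤ 2 * H) (u v : ℕ → ℝ) (A c d : ℝ) (n : ℕ) :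
    ∀ B : ℝ, (∀ i, i < n → A ≤ u i) → (∀ i, i < n → u i ≤ v i) → (∀ i, i < n → v i ≤ B) →
    (∀ i j, i < j → j < n → v i ≤ u j) → A ≤ B → B ≤ c → c ≤ d →
    ∑ i ∈ Finset.range n, Kf H (u i) (v i) c d ≤ Kf H A B c d := by
  induction n with
  | zero => intro B _ _ _ _ hAB hBc hcd
            simpa using Kf_nonneg hp hAB hBc hcd
  | succ n ih =>
    intro B hA huv hvB hord hAB hBc hcd
    rw [Finset.sum_range_succ]
    have hun : A ≤ u n := hA n (Nat.lt_succ_self n)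
    have hunvn : u n ≤ v n := huv n (Nat.lt_succ_self n)
    have hvnB : v n ≤ B := hvB n (Nat.lt_succ_self n)
    have h1 := ih (u n) (fun i hi => hA i (hi.trans (Nat.lt_succ_self n)))
      (fun i hi => huv i (hi.trans (Nat.lt_succ_self n)))
      (fun i hi => hord i n hi (Nat.lt_succ_self n))
      (fun i j hij hj => hord i j hij (hj.trans (Nat.lt_succ_self n)))
      hun (by linarith) hcd
    have h2 := Kf_add_left H A (u n) (v n) c d
    have h3 := Kf_add_left H A (v n) B c d
    have h4 := Kf_nonneg hp hvnB hBc hcd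
    linarith

lemma aux_double_sum_Kf_le {H : ℝ} (hp : 1 ≤ 2 * H) (u v : ℕ → ℝ) (A : ℝ) (n : ℕ) :
    ∀ B : ℝ, (∀ i, i < n → A ≤ u i) → (∀ i, i < n → u i ≤ v i) → (∀ i, i < n → v i ≤ B) →
    (∀ i j, i < j → j < n → v i ≤ u j) → A ≤ B →
    ∑ i ∈ Finset.range n, ∑ j ∈ Finset.range n, Kf H (u i) (v i) (u j) (v j)
      ≤ Kf H A B A B := by
  have h2H : (2:ℝ) * H ≠ 0 := by intro h; rw [h] at hp; linarith
  induction n with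
  | zero =>
    intro B _ _ _ _ hAB
    rw [Kf_diag H h2H]
    simpa using Real.rpow_nonneg (abs_nonneg _) _
  | succ n ih =>
    intro B hA huv hvB hord hAB
    have hun : A ≤ u n := hA n (Nat.lt_succ_self n)
    have hunvn : u n ≤ v n := huv n (Nat.lt_succ_self n)
    have hvnB : v n ≤ B := hvB n (Nat.lt_succ_self n)
    have hsplit : ∑ i ∈ Finset.range (n+1), ∑ j ∈ Finset.range (n+1),
          Kf H (u i) (v i) (u j) (v j)
        = (∑ i ∈ Finset.range n, ∑ j ∈ Finset.range n, Kf H (u i) (v i) (u j) (v j))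
          + (∑ i ∈ Finset.range n, Kf H (u i) (v i) (u n) (v n))
          + ((∑ j ∈ Finset.range n, Kf H (u n) (v n) (u j) (v j))
          + Kf H (u n) (v n) (u n) (v n)) := by
      rw [Finset.sum_range_succ]
      congr 1
      · rw [← Finset.sum_add_distrib]
        exact Finset.sum_congr rfl fun i _ => Finset.sum_range_succ _ n
      · exact Finset.sum_range_succ _ n
    have hQ := ih (u n) (fun i hi => hA i (hi.trans (Nat.lt_succ_self n)))
      (fun i hi => huv i (hi.trans (Nat.lt_succ_self n)))
      (fun i hi => hord i n hi (Nat.lt_succ_self n))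
      (fun i j hij hj => hord i j hij (hj.trans (Nat.lt_succ_self n))) hun
    have hcross : ∑ i ∈ Finset.range n, Kf H (u i) (v i) (u n) (v n)
        ≤ Kf H A (u n) (u n) (v n) :=
      aux_sum_Kf_le hp u v A (u n) (v n) n (u n)
        (fun i hi => hA i (hi.trans (Nat.lt_succ_self n)))
        (fun i hi => huv i (hi.trans (Nat.lt_succ_self n)))
        (fun i hi => hord i n hi (Nat.lt_succ_self n))
        (fun i j hij hj => hord i j hij (hj.trans (Nat.lt_succ_self n)))
        hun le_rfl hunvn
    have hcross2 : ∑ j ∈ Finset.range n, Kf H (u n) (v n) (u j) (v j)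
        ≤ Kf H A (u n) (u n) (v n) := by
      have heq : ∑ j ∈ Finset.range n, Kf H (u n) (v n) (u j) (v j)
          = ∑ j ∈ Finset.range n, Kf H (u j) (v j) (u n) (v n) :=
        Finset.sum_congr rfl fun j _ => Kf_symm _ _ _ _ _
      rw [heq]; exact hcross
    have hexpand : Kf H A (v n) A (v n) = Kf H A (u n) A (u n) + Kf H A (u n) (u n) (v n)
        + Kf H (u n) (v n) A (u n) + Kf H (u n) (v n) (u n) (v n) := by
      simp only [Kf]; ring
    have hsym2 : Kf H (u n) (v n) A (u n) = Kf H A (u n) (u n) (v n) := Kf_symm _ _ _ _ _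
    have hfinal : Kf H A (v n) A (v n) ≤ Kf H A B A B := by
      rw [Kf_diag H h2H, Kf_diag H h2H]
      apply Real.rpow_le_rpow (abs_nonneg _) _ (by linarith)
      rw [abs_of_nonneg (by linarith : (0:ℝ) ≤ v n - A),
        abs_of_nonneg (by linarith : (0:ℝ) ≤ B - A)]
      linarith
    rw [hsplit]
    linarith

lemma aux_sum_Kf_telescope (H c d : ℝ) (w : ℕ → ℝ) (n : ℕ) :
    ∑ i ∈ Finset.range n, Kf H (w i) (w (i+1)) c d = Kf H (w 0) (w n) c d := by
  induction n with
  | zero => simp [Kf_self]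
  | succ n ih => rw [Finset.sum_range_succ, ih, Kf_add_left]

lemma aux_double_sum_Kf_telescope (H : ℝ) (w : ℕ → ℝ) (n : ℕ) :
    ∑ i ∈ Finset.range n, ∑ j ∈ Finset.range n, Kf H (w i) (w (i+1)) (w j) (w (j+1))
      = Kf H (w 0) (w n) (w 0) (w n) := by
  have hinner : ∀ a b : ℝ, ∑ j ∈ Finset.range n, Kf H a b (w j) (w (j+1))
      = Kf H a b (w 0) (w n) := by
    intro a b
    have hsym : ∀ j, Kf H a b (w j) (w (j+1)) = Kf H (w j) (w (j+1)) a b :=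
      fun j => Kf_symm _ _ _ _ _
    simp_rw [hsym, aux_sum_Kf_telescope]
    exact Kf_symm _ _ _ _ _
  simp_rw [hinner, aux_sum_Kf_telescope]

lemma aux_fin_double_sum (n : ℕ) (f : ℕ → ℕ → ℝ) :
    (∑ i : Fin n, ∑ j : Fin n, f i j)
      = ∑ i ∈ Finset.range n, ∑ j ∈ Finset.range n, f i j := by
  rw [← Fin.sum_univ_eq_sum_range (fun i => ∑ j ∈ Finset.range n, f i j) n]
  exact Finset.sum_congr rfl fun i _ => (Fin.sum_univ_eq_sum_range (f i) n)

/-! ### The second moment of a sum of increments -/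

lemma aux_integral_sq_increments {Ω : Type*} [MeasurableSpace Ω] (P : Measure Ω)
    {H : ℝ} {W : ℝ → Ω → ℝ} (hW : IsFractionalBM P H W) (n : ℕ) (u v : Fin n → ℝ)
    (hu : ∀ i, 0 ≤ u i) (huv : ∀ i, u i ≤ v i) :
    ∫ ω, (∑ i, (W (v i) ω - W (u i) ω)) ^ 2 ∂P
      = max (∑ i, ∑ j, Kf H (u i) (v i) (u j) (v j)) 0 := by
  set t : Fin (n + n) → ℝ := Fin.append u v with ht
  set a : Fin (n + n) → ℝ := Fin.append (fun _ => (-1:ℝ)) (fun _ => (1:ℝ)) with ha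
  have htnn : ∀ k, 0 ≤ t k := by
    intro k
    refine Fin.addCases (fun i => ?_) (fun i => ?_) k
    · simpa only [ht, Fin.append_left] using hu i
    · simpa only [ht, Fin.append_right] using (hu i).trans (huv i)
  have hfun : (fun ω => ∑ k, a k * W (t k) ω)
      = fun ω => ∑ i, (W (v i) ω - W (u i) ω) := by
    funext ω
    rw [Fin.sum_univ_add]
    simp only [ht, ha, Fin.append_left, Fin.append_right, neg_mul, one_mul]
    rw [Finset.sum_sub_distrib]
    ring_nf
    rw [Finset.sum_neg_distrib]
    ring
  have hquad : (∑ k, ∑ l, a k * a l * fbmCov H (t k) (t l))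
      = ∑ i, ∑ j, Kf H (u i) (v i) (u j) (v j) := by
    rw [Fin.sum_univ_add]
    simp only [Fin.sum_univ_add, ht, ha, Fin.append_left, Fin.append_right, neg_mul, one_mul,
      mul_neg, neg_neg, mul_one]
    simp only [Kf, Finset.sum_add_distrib, Finset.sum_sub_distrib, Finset.sum_neg_distrib]
    ring
  have hlaw := hW.gaussian (n + n) t a htnn
  rw [hfun, hquad] at hlaw
  have hX : Measurable fun ω => ∑ i, (W (v i) ω - W (u i) ω) :=
    Finset.measurable_sum _ fun i _ => (hW.measurable (v i)).sub (hW.measurable (u i))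
  calc ∫ ω, (∑ i, (W (v i) ω - W (u i) ω)) ^ 2 ∂P
      = ∫ x, x ^ 2 ∂(Measure.map (fun ω => ∑ i, (W (v i) ω - W (u i) ω)) P) :=
        (integral_map hX.aemeasurable
          ((measurable_id.pow_const 2).aestronglyMeasurable)).symm
    _ = ((Real.toNNReal (∑ i, ∑ j, Kf H (u i) (v i) (u j) (v j)) : ℝ≥0) : ℝ) := by
        rw [hlaw, aux_integral_sq_gaussianReal]
    _ = max (∑ i, ∑ j, Kf H (u i) (v i) (u j) (v j)) 0 := Real.coe_toNNReal' _

/-- For `H ∈ [1/2,1)`: `V_n(W^H,S) = S^{2H}`. -/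
theorem weakVar_eq_large_H
    {Ω : Type*} [MeasurableSpace Ω] (P : Measure Ω) [IsProbabilityMeasure P]
    (H : ℝ) (hH : 1 / 2 ≤ H) (hH1 : H < 1)
    (W : ℝ → Ω → ℝ) (hW : IsFractionalBM P H W)
    (S : ℝ) (hS : 0 < S) (n : ℕ) (hn : 1 ≤ n) :
    weakVar P W n S = S ^ (2 * H) := by
  have hp : (1:ℝ) ≤ 2 * H := by linarith
  have h2H : (2:ℝ) * H ≠ 0 := by positivity
  have hnR : (1:ℝ) ≤ (n:ℝ) := by exact_mod_cast hn
  have hnpos : (0:ℝ) < n := by linarith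
  have hSp : (0:ℝ) ≤ S ^ (2*H) := Real.rpow_nonneg hS.le _
  have hK0S : Kf H 0 S 0 S = S ^ (2*H) := by
    rw [Kf_diag H h2H, sub_zero, abs_of_pos hS]
  -- the set defining the weak variance
  set E := {x : ℝ | ∃ u v : Fin n → ℝ,
    (∀ i, 0 ≤ u i) ∧ (∀ i, u i < v i) ∧ (∀ i, v i ≤ S) ∧
    (∀ i j : Fin n, i < j → v i < u j) ∧
    x = ∫ ω, (∑ i, (W (v i) ω - W (u i) ω)) ^ 2 ∂P} with hE
  -- Upper bound
  have hub : ∀ x ∈ E, x ≤ S ^ (2*H) := by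
    rintro x ⟨u, v, hu, huv, hvS, hord, rfl⟩
    rw [aux_integral_sq_increments P hW n u v hu (fun i => (huv i).le)]
    refine max_le ?_ hSp
    set U : ℕ → ℝ := fun i => if h : i < n then u ⟨i, h⟩ else 0 with hU
    set V : ℕ → ℝ := fun i => if h : i < n then v ⟨i, h⟩ else 0 with hV
    have hUval : ∀ i : Fin n, U i.val = u i := by
      intro i; simp [hU, i.isLt]
    have hVval : ∀ i : Fin n, V i.val = v i := by
      intro i; simp [hV, i.isLt]
    have hconv : (∑ i, ∑ j, Kf H (u i) (v i) (u j) (v j))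
        = ∑ i ∈ Finset.range n, ∑ j ∈ Finset.range n, Kf H (U i) (V i) (U j) (V j) := by
      rw [← aux_fin_double_sum n (fun i j => Kf H (U i) (V i) (U j) (V j))]
      exact Finset.sum_congr rfl fun i _ => Finset.sum_congr rfl fun j _ => by
        rw [hUval, hVval, hUval, hVval]
    rw [hconv, ← hK0S]
    refine aux_double_sum_Kf_le hp U V 0 n S ?_ ?_ ?_ ?_ hS.le
    · intro i hi; simp only [hU, dif_pos hi]; exact hu ⟨i, hi⟩
    · intro i hi; simp only [hU, hV, dif_pos hi]; exact (huv ⟨i, hi⟩).le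
    · intro i hi; simp only [hV, dif_pos hi]; exact hvS ⟨i, hi⟩
    · intro i j hij hj
      have hi : i < n := hij.trans hj
      simp only [hU, hV, dif_pos hi, dif_pos hj]
      exact (hord ⟨i, hi⟩ ⟨j, hj⟩ (by exact_mod_cast hij)).le
  -- The family of near-optimal configurations
  set ε := S / n with hε
  have hεpos : 0 < ε := div_pos hS hnpos
  set L : ℝ → ℝ := fun δ => (S - ((n:ℝ) - 1) * δ) / n with hL
  set U : ℝ → ℕ → ℝ := fun δ i => (i:ℝ) * (δ + L δ) with hUd
  set V : ℝ → ℕ → ℝ := fun δ i => U δ i + L δ with hVd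
  have hLpos : ∀ δ ∈ Set.Ioo (0:ℝ) ε, 0 < L δ := by
    rintro δ ⟨hδ0, hδε⟩
    apply div_pos _ hnpos
    have h1 : ((n:ℝ) - 1) * δ ≤ (n:ℝ) * δ := by nlinarith
    have h2 : (n:ℝ) * δ < S := by
      rw [hε] at hδε
      calc (n:ℝ) * δ < (n:ℝ) * (S / n) := by apply mul_lt_mul_of_pos_left hδε hnpos
        _ = S := by field_simp
    linarith
  have hmem : ∀ δ ∈ Set.Ioo (0:ℝ) ε,
      max (∑ i ∈ Finset.range n, ∑ j ∈ Finset.range n,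
        Kf H (U δ i) (V δ i) (U δ j) (V δ j)) 0 ∈ E := by
    rintro δ hδ
    obtain ⟨hδ0, hδε⟩ := hδ
    have hLp := hLpos δ ⟨hδ0, hδε⟩
    have hdLpos : 0 < δ + L δ := by linarith
    have hUVeq : ∀ i : ℕ, V δ i = U δ i + L δ := fun _ => rfl
    have hUeq : ∀ i : ℕ, U δ i = (i:ℝ) * (δ + L δ) := fun _ => rfl
    have hUnn : ∀ i : ℕ, 0 ≤ U δ i := fun i => by
      rw [hUeq]; exact mul_nonneg (Nat.cast_nonneg _) hdLpos.le
    refine ⟨fun i => U δ i, fun i => V δ i, ?_, ?_, ?_, ?_, ?_⟩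
    · intro i
      exact hUnn i
    · intro i
      show U δ i < V δ i
      rw [hUVeq]
      linarith
    · intro i
      show V δ i ≤ S
      have hi : (i:ℝ) ≤ (n:ℝ) - 1 := by
        have h1 : ((i:ℕ):ℝ) + 1 ≤ (n:ℝ) := by exact_mod_cast Nat.succ_le_of_lt i.isLt
        linarith
      have h2 : V δ i ≤ ((n:ℝ) - 1) * (δ + L δ) + L δ := by
        rw [hUVeq, hUeq]
        have := mul_le_mul_of_nonneg_right hi hdLpos.le
        linarith
      have hexact : ((n:ℝ) - 1) * (δ + L δ) + L δ = S := by
        show ((n:ℝ) - 1) * (δ + (S - ((n:ℝ) - 1) * δ) / n) + (S - ((n:ℝ) - 1) * δ) / n = S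
        field_simp
        ring
      linarith
    · intro i j hij
      show V δ i < U δ j
      have hij' : ((i:ℕ):ℝ) + 1 ≤ ((j:ℕ):ℝ) := by
        exact_mod_cast Nat.succ_le_of_lt (by exact_mod_cast hij)
      rw [hUVeq, hUeq, hUeq]
      have h1 := mul_le_mul_of_nonneg_right hij' hdLpos.le
      linarith
    · rw [aux_integral_sq_increments P hW n _ _ (fun i => hUnn i)
        (fun i => by rw [hUVeq]; linarith)]
      rw [aux_fin_double_sum n (fun i j => Kf H (U δ i) (V δ i) (U δ j) (V δ j))]
  have hbdd : BddAbove E := ⟨S ^ (2*H), fun x hx => hub x hx⟩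
  have hEne : E.Nonempty :=
    ⟨_, hmem (ε/2) ⟨by linarith, by linarith⟩⟩
  rw [weakVar, ← hE]
  refine le_antisymm (csSup_le hEne hub) ?_
  -- Lower bound via continuity
  set Qr : ℝ → ℝ := fun δ => ∑ i ∈ Finset.range n, ∑ j ∈ Finset.range n,
    Kf H (U δ i) (V δ i) (U δ j) (V δ j) with hQr
  have hrpow : Continuous fun x : ℝ => x ^ (2*H) :=
    continuous_iff_continuousAt.2 fun x =>
      Real.continuousAt_rpow_const x _ (Or.inr (by linarith))
  have hcov : ∀ {f g : ℝ → ℝ}, Continuous f → Continuous g →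
      Continuous fun δ => fbmCov H (f δ) (g δ) := by
    intro f g hf hg
    simp only [fbmCov]
    exact (((hrpow.comp hf).add (hrpow.comp hg)).sub
      (hrpow.comp (continuous_abs.comp (hg.sub hf)))).div_const 2
  have hKfc : ∀ {f g h k : ℝ → ℝ}, Continuous f → Continuous g → Continuous h →
      Continuous k → Continuous fun δ => Kf H (f δ) (g δ) (h δ) (k δ) := by
    intro f g h k hf hg hh hk
    simp only [Kf]
    exact (((hcov hg hk).sub (hcov hg hh)).sub (hcov hf hk)).add (hcov hf hh)
  have hUc : ∀ i : ℕ, Continuous fun δ => U δ i := by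
    intro i
    simp only [hUd, hL]
    fun_prop
  have hVc : ∀ i : ℕ, Continuous fun δ => V δ i := by
    intro i
    simp only [hVd, hUd, hL]
    fun_prop
  have hQrc : Continuous Qr := by
    refine continuous_finset_sum _ fun i _ => continuous_finset_sum _ fun j _ => ?_
    exact hKfc (hUc i) (hVc i) (hUc j) (hVc j)
  have hQr0 : Qr 0 = S ^ (2*H) := by
    have hw : ∀ i : ℕ, U 0 i = (i:ℝ) * (S/n) := by
      intro i; simp only [hUd, hL]; ring
    have hw' : ∀ i : ℕ, V 0 i = ((i:ℝ) + 1) * (S/n) := by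
      intro i; simp only [hVd, hUd, hL]; ring
    have hQr0' : Qr 0 = ∑ i ∈ Finset.range n, ∑ j ∈ Finset.range n,
        Kf H ((fun m : ℕ => (m:ℝ) * (S/n)) i) ((fun m : ℕ => (m:ℝ) * (S/n)) (i+1))
          ((fun m : ℕ => (m:ℝ) * (S/n)) j) ((fun m : ℕ => (m:ℝ) * (S/n)) (j+1)) := by
      refine Finset.sum_congr rfl fun i _ => Finset.sum_congr rfl fun j _ => ?_
      rw [hw, hw', hw, hw']
      push_cast
      ring_nf
    rw [hQr0', aux_double_sum_Kf_telescope]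
    have h0 : ((0:ℕ):ℝ) * (S/n) = 0 := by norm_num
    have hn' : ((n:ℕ):ℝ) * (S/n) = S := by field_simp
    rw [h0, hn', hK0S]
  have hev : ∀ᶠ δ in nhdsWithin 0 (Set.Ioi (0:ℝ)), Qr δ ≤ sSup E := by
    filter_upwards [Ioo_mem_nhdsGT_of_mem (Set.mem_Ico.2 ⟨le_refl (0:ℝ), hεpos⟩)] with δ hδ
    exact le_trans (le_max_left _ _) (le_csSup hbdd (hmem δ hδ))
  have htend : Tendsto Qr (nhdsWithin 0 (Set.Ioi (0:ℝ))) (nhds (S ^ (2*H))) := by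
    rw [← hQr0]
    exact (hQrc.tendsto 0).mono_left nhdsWithin_le_nhds
  exact le_of_tendsto htend hev

end
end

section
/- Let f : [0,∞) → ℝ be continuous, 0 ≤ s < t and c > 0. Then sup_{ρ∈ℝ} K_{s,t}(c, f − ρ) = sup_{ρ∈(−c/2, c/2]} K_{s,t}(c, f − ρ) ≤ (2/c)·TV^{c/2}(f,[s,t]). -/
open MeasureTheory ProbabilityTheory Filter Asymptotics

noncomputable section

/-- Truncated variation `TV^c(f,[s,t])`: the supremum, over `n ≥ 1` and
`s ≤ s₁ < t₁ ≤ s₂ < t₂ ≤ … ≤ sₙ < tₙ ≤ t`, of `Σᵢ max (|f tᵢ - f sᵢ| - c) 0`. -/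
def truncVar (f : ℝ → ℝ) (s t c : ℝ) : ℝ :=
  sSup {x : ℝ | ∃ (n : ℕ) (u v : Fin n → ℝ),
    (∀ i, s ≤ u i) ∧ (∀ i, u i < v i) ∧ (∀ i, v i ≤ t) ∧
    (∀ i j : Fin n, i < j → v i ≤ u j) ∧
    x = ∑ i, max (|f (v i) - f (u i)| - c) 0}

/-- Number `U_{s,t}(c,f)` of upcrossings of the strip `ℝ × [0,c]` by the graph of `f`:
the number of pairs `(u,v)` with `s ≤ u < v ≤ t`, `f u = 0`, `f v = c` and
`f r ∈ (0,c)` for all `r ∈ (u,v)`. -/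
def upcross (f : ℝ → ℝ) (s t c : ℝ) : ℕ :=
  Set.ncard {p : ℝ × ℝ | s ≤ p.1 ∧ p.1 < p.2 ∧ p.2 ≤ t ∧
    f p.1 = 0 ∧ f p.2 = c ∧ ∀ r ∈ Set.Ioo p.1 p.2, f r ∈ Set.Ioo 0 c}

/-- Number `D_{s,t}(c,f)` of downcrossings of the strip `ℝ × [0,c]` by the graph of `f`. -/
def downcross (f : ℝ → ℝ) (s t c : ℝ) : ℕ :=
  Set.ncard {p : ℝ × ℝ | s ≤ p.1 ∧ p.1 < p.2 ∧ p.2 ≤ t ∧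
    f p.1 = c ∧ f p.2 = 0 ∧ ∀ r ∈ Set.Ioo p.1 p.2, f r ∈ Set.Ioo 0 c}

/-- `N_{s,t}(c,f) = U_{s,t}(c,f) + D_{s,t}(c,f)`. -/
def crossings (f : ℝ → ℝ) (s t c : ℝ) : ℕ := upcross f s t c + downcross f s t c

/-- Total number `K_{s,t}(c,f) := Σ_{p∈ℤ} N_{s,t}(c, f - p·c)` of `c`-level crossings. -/
def levelCrossings (f : ℝ → ℝ) (s t c : ℝ) : ℝ :=
  ∑' p : ℤ, (crossings (fun x => f x - (p : ℝ) * c) s t c : ℝ)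

/-- Total number `KU_{s,t}(c,f) := Σ_{p∈ℤ} U_{s,t}(c, f - p·c)` of `c`-level upcrossings. -/
def levelUpcrossings (f : ℝ → ℝ) (s t c : ℝ) : ℝ :=
  ∑' p : ℤ, (upcross (fun x => f x - (p : ℝ) * c) s t c : ℝ)

/-- Total number `KD_{s,t}(c,f) := Σ_{p∈ℤ} D_{s,t}(c, f - p·c)` of `c`-level downcrossings. -/
def levelDowncrossings (f : ℝ → ℝ) (s t c : ℝ) : ℝ :=
  ∑' p : ℤ, (downcross (fun x => f x - (p : ℝ) * c) s t c : ℝ)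

namespace CrossAux

/-- A crossing of the strip `(p*c, p*c+c)` by `F` in `[s,t]`, upward iff `d = true`. -/
def Xing (F : ℝ → ℝ) (s t c : ℝ) (p : ℤ) (d : Bool) (u v : ℝ) : Prop :=
  s ≤ u ∧ u < v ∧ v ≤ t ∧
  (if d then F u = p * c ∧ F v = p * c + c else F u = p * c + c ∧ F v = p * c) ∧
  ∀ r ∈ Set.Ioo u v, F r ∈ Set.Ioo ((p : ℝ) * c) ((p : ℝ) * c + c)

variable {F : ℝ → ℝ} {s t c : ℝ}

lemma not_mem_ioo (hc : 0 < c) (m n : ℤ) :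
    ((m : ℝ) * c) ∉ Set.Ioo ((n : ℝ) * c) ((n : ℝ) * c + c) := by
  rintro ⟨h1, h2⟩
  have hn : (n : ℝ) < m := lt_of_mul_lt_mul_right (by linarith) hc.le
  have hm : (m : ℝ) < n + 1 := by
    have : (m : ℝ) * c < (n + 1) * c := by ring_nf; ring_nf at h2; linarith
    exact lt_of_mul_lt_mul_right (by linarith) hc.le
  have h1' : n < m := by exact_mod_cast hn
  have h2' : (m : ℝ) < ((n + 1 : ℤ) : ℝ) := by push_cast; linarith
  have : m < n + 1 := by exact_mod_cast h2'
  omega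

lemma endpoint_not_mem (hc : 0 < c) {x : ℝ} (m n : ℤ)
    (hx : x = (m : ℝ) * c ∨ x = (m : ℝ) * c + c) :
    x ∉ Set.Ioo ((n : ℝ) * c) ((n : ℝ) * c + c) := by
  rcases hx with rfl | rfl
  · exact not_mem_ioo hc m n
  · have : ((m : ℝ) * c + c) = ((m + 1 : ℤ) : ℝ) * c := by push_cast; ring
    rw [this]; exact not_mem_ioo hc (m + 1) n

lemma Xing.endpoints {p : ℤ} {d : Bool} {u v : ℝ} (h : Xing F s t c p d u v) :
    (F u = (p : ℝ) * c ∨ F u = (p : ℝ) * c + c) ∧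
    (F v = (p : ℝ) * c ∨ F v = (p : ℝ) * c + c) := by
  obtain ⟨-, -, -, h4, -⟩ := h
  cases d <;> simp_all

lemma rigid_aux (hc : 0 < c) {p1 p2 : ℤ} {d1 d2 : Bool} {u1 v1 u2 v2 : ℝ}
    (h1 : Xing F s t c p1 d1 u1 v1) (h2 : Xing F s t c p2 d2 u2 v2)
    (hle : u1 ≤ u2) (hlt : u2 < v1) :
    p1 = p2 ∧ d1 = d2 ∧ u1 = u2 ∧ v1 = v2 := by
  obtain ⟨hs1, huv1, ht1, hd1, hint1⟩ := h1
  obtain ⟨hs2, huv2, ht2, hd2, hint2⟩ := h2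
  have hu : u1 = u2 := by
    by_contra hne
    have hu12 : u1 < u2 := lt_of_le_of_ne hle hne
    exact endpoint_not_mem hc p2 p1 (Xing.endpoints ⟨hs2, huv2, ht2, hd2, hint2⟩).1
      (hint1 u2 ⟨hu12, hlt⟩)
  subst hu
  have hv : v1 = v2 := by
    rcases lt_trichotomy v1 v2 with h | h | h
    · exact absurd (hint2 v1 ⟨huv1, h⟩)
        (endpoint_not_mem hc p1 p2 (Xing.endpoints ⟨hs1, huv1, ht1, hd1, hint1⟩).2)
    · exact h
    · exact absurd (hint1 v2 ⟨huv2, h⟩)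
        (endpoint_not_mem hc p2 p1 (Xing.endpoints ⟨hs2, huv2, ht2, hd2, hint2⟩).2)
  subst hv
  cases d1 <;> cases d2
  · simp only [Bool.false_eq_true, if_false] at hd1 hd2
    refine ⟨?_, rfl, rfl, rfl⟩
    have e : (p1 : ℝ) * c + c = (p2 : ℝ) * c + c := hd1.1.symm.trans hd2.1
    have : (p1 : ℝ) = p2 := mul_right_cancel₀ hc.ne' (by linarith)
    exact_mod_cast this
  · exfalso
    simp only [Bool.false_eq_true, if_false, if_true] at hd1 hd2
    have e1 : (p1 : ℝ) * c + c = (p2 : ℝ) * c := hd1.1.symm.trans hd2.1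
    have e2 : (p1 : ℝ) * c = (p2 : ℝ) * c + c := hd1.2.symm.trans hd2.2
    linarith
  · exfalso
    simp only [Bool.false_eq_true, if_false, if_true] at hd1 hd2
    have e1 : (p1 : ℝ) * c = (p2 : ℝ) * c + c := hd1.1.symm.trans hd2.1
    have e2 : (p1 : ℝ) * c + c = (p2 : ℝ) * c := hd1.2.symm.trans hd2.2
    linarith
  · simp only [if_true] at hd1 hd2
    refine ⟨?_, rfl, rfl, rfl⟩
    have e : (p1 : ℝ) * c = (p2 : ℝ) * c := hd1.1.symm.trans hd2.1
    have : (p1 : ℝ) = p2 := mul_right_cancel₀ hc.ne' e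
    exact_mod_cast this

lemma rigid (hc : 0 < c) {p1 p2 : ℤ} {d1 d2 : Bool} {u1 v1 u2 v2 : ℝ}
    (h1 : Xing F s t c p1 d1 u1 v1) (h2 : Xing F s t c p2 d2 u2 v2) :
    (p1 = p2 ∧ d1 = d2 ∧ u1 = u2 ∧ v1 = v2) ∨ v1 ≤ u2 ∨ v2 ≤ u1 := by
  rcases le_total u1 u2 with h | h
  · by_cases hv : v1 ≤ u2
    · exact Or.inr (Or.inl hv)
    · exact Or.inl (rigid_aux hc h1 h2 h (lt_of_not_ge hv))
  · by_cases hv : v2 ≤ u1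
    · exact Or.inr (Or.inr hv)
    · obtain ⟨a, b, e, g⟩ := rigid_aux hc h2 h1 h (lt_of_not_ge hv)
      exact Or.inl ⟨a.symm, b.symm, e.symm, g.symm⟩



/-- Separated increasing sequence grows linearly. -/
lemma sep_chain (g : ℕ → ℝ) (δ : ℝ) (m : ℕ)
    (h : ∀ k, k + 1 < m → g k + δ ≤ g (k + 1)) :
    ∀ k, k < m → g 0 + k * δ ≤ g k := by
  intro k
  induction k with
  | zero => intro _; simp
  | succ k ih =>
    intro hk
    have h1 := ih (by omega)
    have h2 := h k hk
    push_cast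
    linarith

/-- An "almost disjoint" finite family of intervals realizes an element
of the truncated-variation defining set. -/
lemma chain_mem (f : ℝ → ℝ) (s t c2 : ℝ) (T : Finset (ℝ × ℝ))
    (h1 : ∀ q ∈ T, s ≤ q.1 ∧ q.1 < q.2 ∧ q.2 ≤ t)
    (h2 : ∀ q ∈ T, ∀ q' ∈ T, q ≠ q' → q.2 ≤ q'.1 ∨ q'.2 ≤ q.1) :
    (∑ q ∈ T, max (|f q.2 - f q.1| - c2) 0) ∈
      {x : ℝ | ∃ (n : ℕ) (u v : Fin n → ℝ),
        (∀ i, s ≤ u i) ∧ (∀ i, u i < v i) ∧ (∀ i, v i ≤ t) ∧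
        (∀ i j : Fin n, i < j → v i ≤ u j) ∧
        x = ∑ i, max (|f (v i) - f (u i)| - c2) 0} := by
  classical
  have hinj : Set.InjOn Prod.fst (T : Set (ℝ × ℝ)) := by
    intro q hq q' hq' h
    by_contra hne
    rcases h2 q (Finset.mem_coe.mp hq) q' (Finset.mem_coe.mp hq') hne with h' | h'
    · have := (h1 q (Finset.mem_coe.mp hq)).2.1; rw [← h] at h'; linarith
    · have := (h1 q' (Finset.mem_coe.mp hq')).2.1; rw [h] at h'; linarith
  set n := T.card with hn
  have hU : (T.image Prod.fst).card = n := Finset.card_image_of_injOn hinj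
  set e := (T.image Prod.fst).orderIsoOfFin hU with he
  have hex : ∀ i : Fin n, ∃! q, q ∈ T ∧ q.1 = ((e i : ℝ)) := by
    intro i
    have hmem : ((e i : ℝ)) ∈ T.image Prod.fst := (e i).2
    obtain ⟨q, hq, hq1⟩ := Finset.mem_image.mp hmem
    refine ⟨q, ⟨hq, hq1⟩, ?_⟩
    rintro q' ⟨hq', hq1'⟩
    exact hinj hq' hq (hq1'.trans hq1.symm)
  set Q : Fin n → ℝ × ℝ := fun i => T.choose _ (hex i) with hQ
  have hQT : ∀ i, Q i ∈ T := fun i => (T.choose_spec _ (hex i)).1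
  have hQ1 : ∀ i, (Q i).1 = (e i : ℝ) := fun i => (T.choose_spec _ (hex i)).2
  have hQst : ∀ i j : Fin n, i < j → (Q i).1 < (Q j).1 := by
    intro i j hij
    rw [hQ1 i, hQ1 j]
    exact_mod_cast e.strictMono hij
  have hQinj : Function.Injective Q := by
    intro i j h
    rcases lt_trichotomy i j with h' | h' | h'
    · exact absurd (congrArg Prod.fst h) (ne_of_lt (hQst i j h'))
    · exact h'
    · exact absurd (congrArg Prod.fst h).symm (ne_of_lt (hQst j i h'))
  have himg : Finset.univ.image Q = T := by
    apply Finset.eq_of_subset_of_card_le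
    · intro q hq
      obtain ⟨i, -, rfl⟩ := Finset.mem_image.mp hq
      exact hQT i
    · rw [Finset.card_image_of_injective _ hQinj, Finset.card_univ, Fintype.card_fin]
  have hord : ∀ i j : Fin n, i < j → (Q i).2 ≤ (Q j).1 := by
    intro i j hij
    have hne : Q i ≠ Q j := hQinj.ne (ne_of_lt hij)
    rcases h2 _ (hQT i) _ (hQT j) hne with h | h
    · exact h
    · exfalso
      have := (h1 _ (hQT j)).2.1
      have := hQst i j hij
      linarith
  refine ⟨n, fun i => (Q i).1, fun i => (Q i).2,
    fun i => (h1 _ (hQT i)).1, fun i => (h1 _ (hQT i)).2.1,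
    fun i => (h1 _ (hQT i)).2.2, hord, ?_⟩
  rw [← himg, Finset.sum_image (fun i _ j _ h => hQinj h)]

/-- The truncated-variation defining set of a continuous function is bounded above. -/
lemma tv_bddAbove (f : ℝ → ℝ) (s t c2 : ℝ) (hf : ContinuousOn f (Set.Icc s t))
    (hst : s < t) (hc2 : 0 < c2) :
    BddAbove {x : ℝ | ∃ (n : ℕ) (u v : Fin n → ℝ),
      (∀ i, s ≤ u i) ∧ (∀ i, u i < v i) ∧ (∀ i, v i ≤ t) ∧
      (∀ i j : Fin n, i < j → v i ≤ u j) ∧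
      x = ∑ i, max (|f (v i) - f (u i)| - c2) 0} := by
  classical
  obtain ⟨M, hM⟩ := isCompact_Icc.exists_bound_of_continuousOn hf
  have hM0 : 0 ≤ M := le_trans (norm_nonneg _) (hM s ⟨le_refl s, hst.le⟩)
  obtain ⟨δ, hδ, hδ'⟩ := Metric.uniformContinuousOn_iff.mp
    (isCompact_Icc.uniformContinuousOn_of_continuous hf) c2 hc2
  refine ⟨((t - s) / δ + 1) * (2 * M), ?_⟩
  rintro x ⟨n, u, v, hu, huv, hv, hord, rfl⟩
  have huI : ∀ i, u i ∈ Set.Icc s t := fun i => ⟨hu i, le_trans (huv i).le (hv i)⟩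
  have hvI : ∀ i, v i ∈ Set.Icc s t := fun i => ⟨le_trans (hu i) (huv i).le, hv i⟩
  set L : Finset (Fin n) := Finset.univ.filter (fun i => δ ≤ v i - u i) with hL
  have hterm : ∀ i : Fin n, max (|f (v i) - f (u i)| - c2) 0 ≤
      if i ∈ L then 2 * M else 0 := by
    intro i
    by_cases hi : i ∈ L
    · rw [if_pos hi]
      have h1 : |f (v i)| ≤ M := hM _ (hvI i)
      have h2 : |f (u i)| ≤ M := hM _ (huI i)
      have : |f (v i) - f (u i)| ≤ 2 * M := by
        calc |f (v i) - f (u i)| ≤ |f (v i)| + |f (u i)| := abs_sub _ _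
        _ ≤ 2 * M := by linarith
      exact max_le (by linarith) (by linarith)
    · rw [if_neg hi]
      have hsm : v i - u i < δ := by
        by_contra h
        exact hi (Finset.mem_filter.mpr ⟨Finset.mem_univ i, le_of_not_gt h⟩)
      have : dist (v i) (u i) < δ := by
        rw [Real.dist_eq, abs_of_pos (by linarith [huv i])]
        linarith
      have := hδ' _ (hvI i) _ (huI i) this
      rw [Real.dist_eq] at this
      exact max_le (by linarith) (le_refl 0)
  have hsum : (∑ i, max (|f (v i) - f (u i)| - c2) 0) ≤ (L.card : ℝ) * (2 * M) := by
    calc (∑ i, max (|f (v i) - f (u i)| - c2) 0)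
        ≤ ∑ i, if i ∈ L then 2 * M else 0 := Finset.sum_le_sum (fun i _ => hterm i)
      _ = ∑ i ∈ L, 2 * M := by rw [Finset.sum_ite_mem]; simp [Finset.univ_inter]
      _ = (L.card : ℝ) * (2 * M) := by rw [Finset.sum_const, nsmul_eq_mul]
  have hcard : (L.card : ℝ) ≤ (t - s) / δ + 1 := by
    set m := L.card with hm
    rcases Nat.eq_zero_or_pos m with h0 | h0
    · rw [h0]
      have h1 : (0:ℝ) ≤ (t - s) / δ := div_nonneg (by linarith) hδ.le
      push_cast
      linarith
    · set eL := L.orderIsoOfFin rfl with heL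
      set g : ℕ → ℝ := fun k => if h : k < m then u ((eL ⟨k, h⟩ : Fin n)) else 0 with hg
      have hstep : ∀ k, k + 1 < m → g k + δ ≤ g (k + 1) := by
        intro k hk
        have hk1 : k < m := by omega
        rw [hg]
        simp only [dif_pos hk, dif_pos hk1]
        set i : Fin n := (eL ⟨k, hk1⟩ : Fin n)
        set j : Fin n := (eL ⟨k + 1, hk⟩ : Fin n)
        have hij : i < j := by
          have : (⟨k, hk1⟩ : Fin m) < ⟨k + 1, hk⟩ := by simp [Fin.lt_def]
          exact_mod_cast eL.strictMono this
        have h1 : v i ≤ u j := hord i j hij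
        have h2 : δ ≤ v i - u i := (Finset.mem_filter.mp (eL ⟨k, hk1⟩).2).2
        linarith
      have hlast : m - 1 < m := by omega
      have := sep_chain g δ m hstep (m - 1) hlast
      have hg0 : s ≤ g 0 := by
        rw [hg]; simp only [dif_pos h0]; exact hu _
      have hgl : g (m - 1) ≤ t := by
        rw [hg]; simp only [dif_pos hlast]
        exact le_trans (huv _).le (hv _)
      have hδms : ((m - 1 : ℕ) : ℝ) * δ ≤ t - s := by linarith
      have hcast : ((m - 1 : ℕ) : ℝ) = (m : ℝ) - 1 := by
        rw [Nat.cast_sub h0]; simp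
      rw [hcast] at hδms
      have : (m : ℝ) - 1 ≤ (t - s) / δ := by
        rw [le_div_iff₀ hδ]; linarith
      linarith
  calc (∑ i, max (|f (v i) - f (u i)| - c2) 0) ≤ (L.card : ℝ) * (2 * M) := hsum
    _ ≤ ((t - s) / δ + 1) * (2 * M) := by
        apply mul_le_mul_of_nonneg_right _ (by linarith)
        linarith [hcard]

end CrossAux

/-- `K̄_{s,t}(c,f) := (1/c)·TV^c(f,[s,t])`. -/
def Kbar (f : ℝ → ℝ) (s t c : ℝ) : ℝ := (1 / c) * truncVar f s t c


namespace CrossAux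

lemma truncVar_sub_const (f : ℝ → ℝ) (ρ s t c2 : ℝ) :
    truncVar (fun x => f x - ρ) s t c2 = truncVar f s t c2 := by
  unfold truncVar
  congr 1
  ext x
  simp only [Set.mem_setOf_eq, sub_sub_sub_cancel_right]

lemma bdd_sub_const (f : ℝ → ℝ) (ρ s t c2 : ℝ)
    (h : BddAbove {x : ℝ | ∃ (n : ℕ) (u v : Fin n → ℝ),
      (∀ i, s ≤ u i) ∧ (∀ i, u i < v i) ∧ (∀ i, v i ≤ t) ∧
      (∀ i j : Fin n, i < j → v i ≤ u j) ∧
      x = ∑ i, max (|f (v i) - f (u i)| - c2) 0}) :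
    BddAbove {x : ℝ | ∃ (n : ℕ) (u v : Fin n → ℝ),
      (∀ i, s ≤ u i) ∧ (∀ i, u i < v i) ∧ (∀ i, v i ≤ t) ∧
      (∀ i j : Fin n, i < j → v i ≤ u j) ∧
      x = ∑ i, max (|(f (v i) - ρ) - (f (u i) - ρ)| - c2) 0} := by
  convert h using 3 with x
  simp only [sub_sub_sub_cancel_right]

/-- Key counting estimate. -/
lemma sum_crossings_le (F : ℝ → ℝ) (s t c : ℝ) (hc : 0 < c)
    (hbdd : BddAbove {x : ℝ | ∃ (n : ℕ) (u v : Fin n → ℝ),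
      (∀ i, s ≤ u i) ∧ (∀ i, u i < v i) ∧ (∀ i, v i ≤ t) ∧
      (∀ i j : Fin n, i < j → v i ≤ u j) ∧
      x = ∑ i, max (|F (v i) - F (u i)| - (c/2)) 0}) (Fi : Finset ℤ) :
    (∑ p ∈ Fi, (crossings (fun x => F x - (p : ℝ) * c) s t c : ℝ)) * (c / 2)
      ≤ truncVar F s t (c / 2) := by
  classical
  set G : ℤ → Bool → Set (ℝ × ℝ) := fun p d => {q | Xing F s t c p d q.1 q.2} with hG
  have hup : ∀ p : ℤ, upcross (fun x => F x - (p : ℝ) * c) s t c = (G p true).ncard := by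
    intro p
    unfold upcross
    congr 1
    ext q
    simp only [Set.mem_setOf_eq, hG, Xing, if_true, Set.mem_Ioo]
    constructor
    · rintro ⟨a, b, c', d, e, g⟩
      refine ⟨a, b, c', ⟨by linarith, by linarith⟩, fun r hr => ?_⟩
      obtain ⟨x1, x2⟩ := g r hr
      exact ⟨by linarith, by linarith⟩
    · rintro ⟨a, b, c', ⟨d1, d2⟩, g⟩
      refine ⟨a, b, c', by linarith, by linarith, fun r hr => ?_⟩
      obtain ⟨x1, x2⟩ := g r hr
      exact ⟨by linarith, by linarith⟩
  have hdown : ∀ p : ℤ, downcross (fun x => F x - (p : ℝ) * c) s t c = (G p false).ncard := by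
    intro p
    unfold downcross
    congr 1
    ext q
    simp only [Set.mem_setOf_eq, hG, Xing, Bool.false_eq_true, if_false, Set.mem_Ioo]
    constructor
    · rintro ⟨a, b, c', d, e, g⟩
      refine ⟨a, b, c', ⟨by linarith, by linarith⟩, fun r hr => ?_⟩
      obtain ⟨x1, x2⟩ := g r hr
      exact ⟨by linarith, by linarith⟩
    · rintro ⟨a, b, c', ⟨d1, d2⟩, g⟩
      refine ⟨a, b, c', by linarith, by linarith, fun r hr => ?_⟩
      obtain ⟨x1, x2⟩ := g r hr
      exact ⟨by linarith, by linarith⟩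
  set Hf : ℤ → Bool → Finset (ℝ × ℝ) :=
    fun p d => if h : (G p d).Finite then h.toFinset else ∅ with hHf
  have hHeq : ∀ p d, Hf p d = if h : (G p d).Finite then h.toFinset else ∅ :=
    fun p d => rfl
  have hHsub : ∀ p d, ∀ q ∈ Hf p d, Xing F s t c p d q.1 q.2 := by
    intro p d q hq
    rw [hHeq] at hq
    split at hq
    · rename_i h
      exact h.mem_toFinset.mp hq
    · exact absurd hq (Finset.notMem_empty q)
  have hcardle : ∀ p d, (G p d).ncard ≤ (Hf p d).card := by
    intro p d
    rw [hHeq]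
    split
    · rename_i h
      rw [Set.ncard_eq_toFinset_card _ h]
    · rename_i h
      rw [Set.Infinite.ncard h]
      exact Nat.zero_le _
  have hdisj : ∀ (p p' : ℤ) (d d' : Bool), (p, d) ≠ (p', d') →
      Disjoint (Hf p d) (Hf p' d') := by
    intro p p' d d' hne
    rw [Finset.disjoint_left]
    intro q hq hq'
    have h1 := hHsub p d q hq
    have h2 := hHsub p' d' q hq'
    rcases rigid hc h1 h2 with ⟨e1, e2, -, -⟩ | h | h
    · exact hne (by rw [e1, e2])
    · exact absurd h (not_le.mpr h1.2.1)
    · exact absurd h (not_le.mpr h1.2.1)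
  set S : Finset (ℝ × ℝ) := Fi.biUnion (fun p => Hf p true ∪ Hf p false) with hS
  have hScard : (∑ p ∈ Fi, (crossings (fun x => F x - (p : ℝ) * c) s t c)) ≤ S.card := by
    rw [hS, Finset.card_biUnion]
    · apply Finset.sum_le_sum
      intro p _
      unfold crossings
      rw [hup p, hdown p,
        Finset.card_union_of_disjoint (hdisj p p true false (by simp))]
      exact Nat.add_le_add (hcardle p true) (hcardle p false)
    · intro p hp p' hp' hpp'
      have d1 := hdisj p p' true true (by simp [hpp'])
      have d2 := hdisj p p' true false (by simp [hpp'])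
      have d3 := hdisj p p' false true (by simp [hpp'])
      have d4 := hdisj p p' false false (by simp [hpp'])
      simp only [Finset.disjoint_union_left, Finset.disjoint_union_right]
      exact ⟨⟨d1, d3⟩, d2, d4⟩
  have hSX : ∀ q ∈ S, ∃ p d, Xing F s t c p d q.1 q.2 := by
    intro q hq
    rw [hS, Finset.mem_biUnion] at hq
    obtain ⟨p, -, hq⟩ := hq
    rcases Finset.mem_union.mp hq with h | h
    · exact ⟨p, true, hHsub p true q h⟩
    · exact ⟨p, false, hHsub p false q h⟩
  have hmem := chain_mem F s t (c / 2) S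
    (fun q hq => by obtain ⟨p, d, hx⟩ := hSX q hq; exact ⟨hx.1, hx.2.1, hx.2.2.1⟩)
    (fun q hq q' hq' hne => by
      obtain ⟨p, d, hx⟩ := hSX q hq
      obtain ⟨p', d', hx'⟩ := hSX q' hq'
      rcases rigid hc hx hx' with ⟨-, -, e3, e4⟩ | h | h
      · exact absurd (Prod.ext e3 e4) hne
      · exact Or.inl h
      · exact Or.inr h)
  have hval : ∀ q ∈ S, max (|F q.2 - F q.1| - c / 2) 0 = c / 2 := by
    intro q hq
    obtain ⟨p, d, hx⟩ := hSX q hq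
    have : |F q.2 - F q.1| = c := by
      obtain ⟨-, -, -, hd, -⟩ := hx
      cases d
      · simp only [Bool.false_eq_true, if_false] at hd
        rw [hd.1, hd.2]
        rw [show (p : ℝ) * c - ((p : ℝ) * c + c) = -c by ring, abs_neg, abs_of_pos hc]
      · simp only [if_true] at hd
        rw [hd.1, hd.2]
        rw [show (p : ℝ) * c + c - (p : ℝ) * c = c by ring, abs_of_pos hc]
    rw [this]
    rw [show c - c / 2 = c / 2 by ring]
    exact max_eq_left (by linarith)
  have hsumval : (∑ q ∈ S, max (|F q.2 - F q.1| - c / 2) 0) = (S.card : ℝ) * (c / 2) := by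
    rw [Finset.sum_congr rfl hval, Finset.sum_const, nsmul_eq_mul]
  have hle : (S.card : ℝ) * (c / 2) ≤ truncVar F s t (c / 2) := by
    rw [← hsumval]
    exact le_csSup hbdd hmem
  calc (∑ p ∈ Fi, (crossings (fun x => F x - (p : ℝ) * c) s t c : ℝ)) * (c / 2)
      ≤ (S.card : ℝ) * (c / 2) := by
        apply mul_le_mul_of_nonneg_right _ (by linarith)
        exact_mod_cast hScard
    _ ≤ truncVar F s t (c / 2) := hle

end CrossAux

/-- For continuous `f`, `sup_{ρ∈ℝ} K_{s,t}(c, f-ρ) = sup_{ρ∈(-c/2,c/2]} K_{s,t}(c, f-ρ)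
≤ (2/c)·TV^{c/2}(f,[s,t])`. -/
theorem sup_levelCrossings_le_truncVar
    (f : ℝ → ℝ) (hf : ContinuousOn f (Set.Ici 0))
    (s t c : ℝ) (hs : 0 ≤ s) (hst : s < t) (hc : 0 < c) :
    (⨆ ρ : ℝ, levelCrossings (fun x => f x - ρ) s t c) =
      (⨆ ρ : Set.Ioc (-(c / 2)) (c / 2),
        levelCrossings (fun x => f x - (ρ : ℝ)) s t c) ∧
    (⨆ ρ : ℝ, levelCrossings (fun x => f x - ρ) s t c) ≤
      2 / c * truncVar f s t (c / 2) := by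
  classical
  set K : ℝ → ℝ := fun ρ => levelCrossings (fun x => f x - ρ) s t c with hK
  have hfc : ∀ ρ : ℝ, ContinuousOn (fun x => f x - ρ) (Set.Icc s t) := by
    intro ρ
    apply ContinuousOn.sub (hf.mono ?_) continuousOn_const
    intro x hx
    exact le_trans hs hx.1
  have hbdd : ∀ ρ : ℝ, BddAbove {x : ℝ | ∃ (n : ℕ) (u v : Fin n → ℝ),
      (∀ i, s ≤ u i) ∧ (∀ i, u i < v i) ∧ (∀ i, v i ≤ t) ∧
      (∀ i j : Fin n, i < j → v i ≤ u j) ∧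
      x = ∑ i, max (|(f (v i) - ρ) - (f (u i) - ρ)| - (c/2)) 0} := by
    intro ρ
    exact CrossAux.tv_bddAbove (fun x => f x - ρ) s t (c/2) (hfc ρ) hst (by linarith)
  have hbddf : BddAbove {x : ℝ | ∃ (n : ℕ) (u v : Fin n → ℝ),
      (∀ i, s ≤ u i) ∧ (∀ i, u i < v i) ∧ (∀ i, v i ≤ t) ∧
      (∀ i j : Fin n, i < j → v i ≤ u j) ∧
      x = ∑ i, max (|f (v i) - f (u i)| - (c/2)) 0} :=
    CrossAux.tv_bddAbove f s t (c/2) (hf.mono (fun x hx => le_trans hs hx.1)) hst (by linarith)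
  have h0mem : (0 : ℝ) ∈ {x : ℝ | ∃ (n : ℕ) (u v : Fin n → ℝ),
      (∀ i, s ≤ u i) ∧ (∀ i, u i < v i) ∧ (∀ i, v i ≤ t) ∧
      (∀ i j : Fin n, i < j → v i ≤ u j) ∧
      x = ∑ i, max (|f (v i) - f (u i)| - (c/2)) 0} :=
    ⟨0, Fin.elim0, Fin.elim0, fun i => i.elim0, fun i => i.elim0, fun i => i.elim0,
      fun i => i.elim0, by simp⟩
  have hTV0 : 0 ≤ truncVar f s t (c/2) := le_csSup hbddf h0mem
  -- the uniform bound
  have hbound : ∀ ρ : ℝ, K ρ ≤ 2 / c * truncVar f s t (c / 2) := by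
    intro ρ
    have hKρ : K ρ = ∑' p : ℤ,
        (crossings (fun x => (f x - ρ) - (p : ℝ) * c) s t c : ℝ) := rfl
    rw [hKρ]
    by_cases hsumm : Summable (fun p : ℤ =>
        (crossings (fun x => (f x - ρ) - (p : ℝ) * c) s t c : ℝ))
    · apply Summable.tsum_le_of_sum_le hsumm
      intro Fi
      have key := CrossAux.sum_crossings_le (fun x => f x - ρ) s t c hc
        (CrossAux.bdd_sub_const f ρ s t (c/2) hbddf) Fi
      rw [CrossAux.truncVar_sub_const f ρ s t (c/2)] at key
      calc (∑ p ∈ Fi, (crossings (fun x => (f x - ρ) - (p : ℝ) * c) s t c : ℝ))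
          = ((∑ p ∈ Fi, (crossings (fun x => (f x - ρ) - (p : ℝ) * c) s t c : ℝ))
              * (c / 2)) * (2 / c) := by
              rw [mul_assoc, show c / 2 * (2 / c) = 1 by field_simp, mul_one]
        _ ≤ truncVar f s t (c / 2) * (2 / c) := by
            apply mul_le_mul_of_nonneg_right key (by positivity)
        _ = 2 / c * truncVar f s t (c / 2) := by ring
    · rw [tsum_eq_zero_of_not_summable hsumm]
      positivity
  -- periodicity
  have hper : Function.Periodic K c := by
    intro ρ
    have hKρ : ∀ σ : ℝ, K σ = ∑' p : ℤ,
        (crossings (fun x => (f x - σ) - (p : ℝ) * c) s t c : ℝ) := fun _ => rfl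
    rw [hKρ, hKρ]
    calc ∑' p : ℤ, (crossings (fun x => (f x - (ρ + c)) - (p : ℝ) * c) s t c : ℝ)
        = ∑' p : ℤ, (crossings (fun x => (f x - ρ) - ((p + 1 : ℤ) : ℝ) * c) s t c : ℝ) := by
          apply tsum_congr
          intro p
          have hfe : (fun x => (f x - (ρ + c)) - (p : ℝ) * c)
              = (fun x => (f x - ρ) - ((p + 1 : ℤ) : ℝ) * c) := by
            funext x; push_cast; ring
          rw [hfe]
      _ = ∑' p : ℤ, (crossings (fun x => (f x - ρ) - (p : ℝ) * c) s t c : ℝ) := by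
          simpa using (Equiv.addRight (1 : ℤ)).tsum_eq
            (fun q : ℤ => (crossings (fun x => (f x - ρ) - (q : ℝ) * c) s t c : ℝ))
  have hmem : ∀ ρ : ℝ, ∃ ρ' ∈ Set.Ioc (-(c/2)) (c/2), K ρ' = K ρ := by
    intro ρ
    set k : ℤ := ⌈ρ / c - 1 / 2⌉ with hk
    have h1 : ρ / c - 1 / 2 ≤ (k : ℝ) := Int.le_ceil _
    have h2 : (k : ℝ) < ρ / c - 1 / 2 + 1 := Int.ceil_lt_add_one _
    refine ⟨ρ - k * c, ⟨?_, ?_⟩, hper.sub_int_mul_eq k⟩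
    · have e : (ρ / c + 1 / 2) * c = ρ + c / 2 := by field_simp
      have : (k : ℝ) * c < (ρ / c + 1 / 2) * c :=
        mul_lt_mul_of_pos_right (by linarith) hc
      rw [e] at this
      linarith
    · have e : (ρ / c - 1 / 2) * c = ρ - c / 2 := by field_simp
      have : (ρ / c - 1 / 2) * c ≤ (k : ℝ) * c :=
        mul_le_mul_of_nonneg_right h1 hc.le
      rw [e] at this
      linarith
  have hrange : Set.range K = Set.range (fun ρ : Set.Ioc (-(c/2)) (c/2) => K ρ) := by
    apply Set.Subset.antisymm
    · rintro x ⟨ρ, rfl⟩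
      obtain ⟨ρ', hρ', hKe⟩ := hmem ρ
      exact ⟨⟨ρ', hρ'⟩, hKe⟩
    · rintro x ⟨ρ, rfl⟩
      exact ⟨ρ, rfl⟩
  constructor
  · show (⨆ ρ : ℝ, K ρ) = ⨆ ρ : Set.Ioc (-(c/2)) (c/2), K ρ
    rw [← sSup_range, ← sSup_range, hrange]
  · exact Real.iSup_le hbound (by positivity)


end
end

section
/- Let f : [0,∞) → ℝ be continuous, 0 ≤ s < t and c > 0. Then for every ρ ∈ ℝ: K_{s,t}(c, f − ρ) ≥ (1/c)·TV^{2c}(f,[s,t]). -/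
open MeasureTheory ProbabilityTheory Filter Asymptotics

noncomputable section


/-- Existence of an upcrossing pair. -/
lemma exists_upcross_pair {g : ℝ → ℝ} {u v c : ℝ}
    (hg : ContinuousOn g (Set.Icc u v)) (huv : u < v) (hc : 0 < c)
    (hu : g u ≤ 0) (hv : c ≤ g v) :
    ∃ z w, u ≤ z ∧ z < w ∧ w ≤ v ∧ g z = 0 ∧ g w = c ∧
      ∀ r ∈ Set.Ioo z w, g r ∈ Set.Ioo 0 c := by
  have hle : u ≤ v := huv.le
  set T : Set ℝ := Set.Icc u v ∩ g ⁻¹' {c} with hTdef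
  have hTclosed : IsClosed T := hg.preimage_isClosed_of_isClosed isClosed_Icc isClosed_singleton
  have hTcomp : IsCompact T := isCompact_Icc.of_isClosed_subset hTclosed Set.inter_subset_left
  have hTne : T.Nonempty := by
    have : c ∈ Set.Icc (g u) (g v) := ⟨hu.trans hc.le, hv⟩
    obtain ⟨x, hx, hgx⟩ := intermediate_value_Icc hle hg this
    exact ⟨x, hx, hgx⟩
  set w := sInf T with hwdef
  have hwT : w ∈ T := hTcomp.sInf_mem hTne
  have hww : w ∈ Set.Icc u v := hwT.1
  have hgw : g w = c := hwT.2
  have huw : u < w := lt_of_le_of_ne hww.1 (fun h => by rw [← h] at hgw; nlinarith)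
  set S : Set ℝ := Set.Icc u w ∩ g ⁻¹' {(0:ℝ)} with hSdef
  have hgS : ContinuousOn g (Set.Icc u w) := hg.mono (Set.Icc_subset_Icc le_rfl hww.2)
  have hSclosed : IsClosed S := hgS.preimage_isClosed_of_isClosed isClosed_Icc isClosed_singleton
  have hScomp : IsCompact S := isCompact_Icc.of_isClosed_subset hSclosed Set.inter_subset_left
  have hSne : S.Nonempty := by
    have : (0:ℝ) ∈ Set.Icc (g u) (g w) := ⟨hu, by rw [hgw]; exact hc.le⟩
    obtain ⟨x, hx, hgx⟩ := intermediate_value_Icc huw.le hgS this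
    exact ⟨x, hx, hgx⟩
  set z := sSup S with hzdef
  have hzS : z ∈ S := hScomp.sSup_mem hSne
  have hzz : z ∈ Set.Icc u w := hzS.1
  have hgz : g z = 0 := hzS.2
  have hzw : z < w := lt_of_le_of_ne hzz.2 (fun h => by rw [h] at hgz; rw [hgz] at hgw; linarith)
  refine ⟨z, w, hzz.1, hzw, hww.2, hgz, hgw, ?_⟩
  intro r hr
  have hrIcc : r ∈ Set.Icc u v := ⟨hzz.1.trans hr.1.le, hr.2.le.trans hww.2⟩
  have hruw : r ∈ Set.Icc u w := ⟨hzz.1.trans hr.1.le, hr.2.le⟩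
  have hrne0 : g r ≠ 0 := fun h => absurd (le_csSup hScomp.bddAbove ⟨hruw, h⟩) (not_le.2 hr.1)
  have hrnec : g r ≠ c := fun h => absurd (csInf_le hTcomp.bddBelow ⟨hrIcc, h⟩) (not_le.2 hr.2)
  constructor
  · by_contra hle0
    push_neg at hle0
    have hr0 : g r < 0 := lt_of_le_of_ne hle0 hrne0
    have : (0:ℝ) ∈ Set.Icc (g r) (g w) := ⟨hr0.le, by rw [hgw]; exact hc.le⟩
    obtain ⟨y, hy, hgy⟩ := intermediate_value_Icc hr.2.le (hgS.mono (Set.Icc_subset_Icc hruw.1 le_rfl)) this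
    have hyS : y ∈ S := ⟨⟨hruw.1.trans hy.1, hy.2⟩, hgy⟩
    have : y ≤ z := le_csSup hScomp.bddAbove hyS
    have : z < y := lt_of_lt_of_le hr.1 hy.1
    linarith
  · by_contra hgec
    push_neg at hgec
    have hrc : c < g r := lt_of_le_of_ne hgec (Ne.symm hrnec)
    have : c ∈ Set.Icc (g z) (g r) := ⟨by rw [hgz]; exact hc.le, hrc.le⟩
    obtain ⟨y, hy, hgy⟩ := intermediate_value_Icc hr.1.le
      (hg.mono (Set.Icc_subset_Icc hzz.1 hrIcc.2)) this
    have hyT : y ∈ T := ⟨⟨hzz.1.trans hy.1, hy.2.trans hrIcc.2⟩, hgy⟩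
    have : w ≤ y := csInf_le hTcomp.bddBelow hyT
    have : y < w := lt_of_le_of_lt hy.2 hr.2
    linarith

/-- Finiteness of the crossing-pair set. -/
lemma cross_set_finite {g : ℝ → ℝ} {s t c α β : ℝ}
    (hg : ContinuousOn g (Set.Icc s t)) (hc : 0 < c)
    (hα : α ∉ Set.Ioo 0 c) (hβ : β ∉ Set.Ioo 0 c) (hαβ : c ≤ |β - α|) :
    {p : ℝ × ℝ | s ≤ p.1 ∧ p.1 < p.2 ∧ p.2 ≤ t ∧
      g p.1 = α ∧ g p.2 = β ∧ ∀ r ∈ Set.Ioo p.1 p.2, g r ∈ Set.Ioo 0 c}.Finite := by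
  set U := {p : ℝ × ℝ | s ≤ p.1 ∧ p.1 < p.2 ∧ p.2 ≤ t ∧
      g p.1 = α ∧ g p.2 = β ∧ ∀ r ∈ Set.Ioo p.1 p.2, g r ∈ Set.Ioo 0 c} with hU
  have huc : UniformContinuousOn g (Set.Icc s t) :=
    isCompact_Icc.uniformContinuousOn_of_continuous hg
  obtain ⟨δ, hδ, hδ'⟩ := Metric.uniformContinuousOn_iff.mp huc c hc
  -- every pair has length ≥ δ
  have hlen : ∀ p ∈ U, δ ≤ p.2 - p.1 := by
    rintro ⟨x, y⟩ ⟨h1, h2, h3, h4, h5, _⟩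
    by_contra hlt
    push_neg at hlt
    have hx : x ∈ Set.Icc s t := ⟨h1, (le_of_lt h2).trans h3⟩
    have hy : y ∈ Set.Icc s t := ⟨h1.trans h2.le, h3⟩
    simp only at h1 h2 h3 h4 h5 hlt
    have := hδ' x hx y hy (by rw [Real.dist_eq]; rw [abs_of_nonpos (by linarith)]; linarith)
    rw [Real.dist_eq, h4, h5] at this
    rw [abs_sub_comm] at hαβ
    linarith
  -- first components of distinct pairs differ; indeed they are δ-separated
  have hkey : ∀ p ∈ U, ∀ q ∈ U, |p.1 - q.1| < δ → p = q := by
    have main : ∀ p ∈ U, ∀ q ∈ U, p.1 ≤ q.1 → |p.1 - q.1| < δ → p = q := by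
      rintro ⟨x, y⟩ hp ⟨x', y'⟩ hq hle habs
      simp only at hle habs ⊢
      obtain ⟨h1, h2, h3, h4, h5, h6⟩ := hp
      obtain ⟨h1', h2', h3', h4', h5', h6'⟩ := hq
      simp only at h1 h2 h3 h4 h5 h6 h1' h2' h3' h4' h5' h6'
      have hxx : x = x' := by
        by_contra hne
        have hxlt : x < x' := lt_of_le_of_ne hle hne
        have : x' < y := by
          have := hlen (x, y) ⟨h1, h2, h3, h4, h5, h6⟩
          simp only at this
          rw [abs_of_nonpos (by linarith)] at habs
          linarith
        have := h6 x' ⟨hxlt, this⟩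
        rw [h4'] at this
        exact hα this
      subst hxx
      have hyy : y = y' := by
        rcases lt_trichotomy y y' with h | h | h
        · have := h6' y ⟨h2, h⟩
          rw [h5] at this
          exact absurd this hβ
        · exact h
        · have := h6 y' ⟨h2', h⟩
          rw [h5'] at this
          exact absurd this hβ
      rw [hyy]
    intro p hp q hq habs
    rcases le_total p.1 q.1 with h | h
    · exact main p hp q hq h habs
    · exact (main q hq p hp h (by rw [abs_sub_comm]; exact habs)).symm
  -- inject into a finite set of integers
  have : Set.InjOn (fun p : ℝ × ℝ => ⌊(p.1 - s) / δ⌋) U := by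
    intro p hp q hq hfl
    simp only at hfl
    apply hkey p hp q hq
    have h1 := Int.floor_le ((p.1 - s) / δ)
    have h2 := Int.lt_floor_add_one ((p.1 - s) / δ)
    have h3 := Int.floor_le ((q.1 - s) / δ)
    have h4 := Int.lt_floor_add_one ((q.1 - s) / δ)
    rw [hfl] at h1 h2
    have H1 : (⌊(q.1 - s) / δ⌋ : ℝ) * δ ≤ p.1 - s := by rwa [← le_div_iff₀ hδ]
    have H2 : p.1 - s < ((⌊(q.1 - s) / δ⌋ : ℝ) + 1) * δ := by rwa [← div_lt_iff₀ hδ]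
    have H3 : (⌊(q.1 - s) / δ⌋ : ℝ) * δ ≤ q.1 - s := by rwa [← le_div_iff₀ hδ]
    have H4 : q.1 - s < ((⌊(q.1 - s) / δ⌋ : ℝ) + 1) * δ := by rwa [← div_lt_iff₀ hδ]
    rw [abs_lt]
    constructor <;> nlinarith
  apply Set.Finite.of_finite_image _ this
  apply (Set.finite_Icc (⌊(s - s) / δ⌋) ⌊(t - s) / δ⌋).subset
  rintro k ⟨⟨x, y⟩, hxy, rfl⟩
  obtain ⟨h1, h2, h3, _, _, _⟩ := hxy
  simp only at h1 h2 h3 ⊢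
  constructor
  · exact Int.floor_le_floor (by apply div_le_div_of_nonneg_right _ hδ.le; linarith)
  · exact Int.floor_le_floor (by apply div_le_div_of_nonneg_right _ hδ.le; linarith)

/-- Injection of disjoint-interval indices into a finite set of pairs. -/
lemma card_le_ncard_of_pairs {n : ℕ} {u v : Fin n → ℝ}
    (h4 : ∀ i j : Fin n, i < j → v i ≤ u j) {W : Set (ℝ × ℝ)} (hW : W.Finite)
    (s : Finset (Fin n))
    (hex : ∀ i ∈ s, ∃ q, q ∈ W ∧ u i ≤ q.1 ∧ q.1 < q.2 ∧ q.2 ≤ v i) :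
    s.card ≤ W.ncard := by
  classical
  set φ : Fin n → ℝ × ℝ := fun i =>
    if h : ∃ q, q ∈ W ∧ u i ≤ q.1 ∧ q.1 < q.2 ∧ q.2 ≤ v i then h.choose else (0, 0) with hφdef
  have hspec : ∀ i ∈ s, φ i ∈ W ∧ u i ≤ (φ i).1 ∧ (φ i).1 < (φ i).2 ∧ (φ i).2 ≤ v i := by
    intro i hi
    have h := hex i hi
    simp only [hφdef, dif_pos h]
    exact h.choose_spec
  rw [Set.ncard_eq_toFinset_card _ hW]
  apply Finset.card_le_card_of_injOn φ
  · intro i hi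
    rw [Finset.mem_coe, Set.Finite.mem_toFinset]
    exact (hspec i hi).1
  · intro i hi j hj hij
    by_contra hne
    rcases lt_trichotomy i j with h | h | h
    · have hvu := h4 i j h
      have hi' := (hspec i hi).2
      have hj' := (hspec j hj).2
      rw [hij] at hi'
      linarith [hi'.1, hi'.2.1, hi'.2.2, hj'.1, hj'.2.1, hj'.2.2]
    · exact hne h
    · have hvu := h4 j i h
      have hi' := (hspec i hi).2
      have hj' := (hspec j hj).2
      rw [hij] at hi'
      linarith [hi'.1, hi'.2.1, hi'.2.2, hj'.1, hj'.2.1, hj'.2.2]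

/-- Per-interval count of strips. -/
lemma strip_count {a b c : ℝ} (hc : 0 < c) (hab : a ≤ b) :
    max (|b - a| - 2 * c) 0 ≤ c * (Finset.Icc ⌈a / c⌉ (⌊b / c⌋ - 1)).card := by
  have hcard : (Finset.Icc ⌈a / c⌉ (⌊b / c⌋ - 1)).card = (⌊b / c⌋ - ⌈a / c⌉).toNat := by
    rw [Int.card_Icc]; congr 1; ring
  apply max_le
  · rw [abs_of_nonneg (by linarith)]
    rcases le_or_gt (b - a) (2 * c) with h | h
    · have : (0:ℝ) ≤ c * (Finset.Icc ⌈a / c⌉ (⌊b / c⌋ - 1)).card := by positivity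
      linarith
    · have h1 : b / c - 1 < (⌊b / c⌋ : ℝ) := Int.sub_one_lt_floor _
      have h2 : (⌈a / c⌉ : ℝ) < a / c + 1 := Int.ceil_lt_add_one _
      have h3 : ((⌊b / c⌋ - ⌈a / c⌉ : ℤ) : ℝ) ≤ ((⌊b / c⌋ - ⌈a / c⌉).toNat : ℝ) := by
        exact_mod_cast Int.self_le_toNat _
      have h4 : c * (b / c) = b := mul_div_cancel₀ _ hc.ne'
      have h5 : c * (a / c) = a := mul_div_cancel₀ _ hc.ne'
      rw [hcard]
      push_cast at h3 ⊢
      nlinarith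
  · positivity


/-- For continuous `f` and every `ρ ∈ ℝ`: `K_{s,t}(c, f-ρ) ≥ (1/c)·TV^{2c}(f,[s,t])`. -/
theorem levelCrossings_ge_truncVar
    (f : ℝ → ℝ) (hf : ContinuousOn f (Set.Ici 0))
    (s t c : ℝ) (hs : 0 ≤ s) (hst : s < t) (hc : 0 < c) (ρ : ℝ) :
    1 / c * truncVar f s t (2 * c) ≤ levelCrossings (fun x => f x - ρ) s t c := by
  classical
  have hsub : Set.Icc s t ⊆ Set.Ici (0:ℝ) := fun x hx => le_trans hs hx.1
  have hfc : ContinuousOn f (Set.Icc s t) := hf.mono hsub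
  set g : ℤ → ℝ → ℝ := fun p x => f x - ρ - (p:ℝ) * c with hgdef
  have hgc : ∀ p : ℤ, ContinuousOn (g p) (Set.Icc s t) :=
    fun p => (hfc.sub continuousOn_const).sub continuousOn_const
  -- the crossing sets
  set Up : ℤ → Set (ℝ × ℝ) := fun p =>
    {q : ℝ × ℝ | s ≤ q.1 ∧ q.1 < q.2 ∧ q.2 ≤ t ∧
      g p q.1 = 0 ∧ g p q.2 = c ∧ ∀ r ∈ Set.Ioo q.1 q.2, g p r ∈ Set.Ioo 0 c} with hUpdef
  set Dn : ℤ → Set (ℝ × ℝ) := fun p =>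
    {q : ℝ × ℝ | s ≤ q.1 ∧ q.1 < q.2 ∧ q.2 ≤ t ∧
      g p q.1 = c ∧ g p q.2 = 0 ∧ ∀ r ∈ Set.Ioo q.1 q.2, g p r ∈ Set.Ioo 0 c} with hDndef
  have h0c : (0:ℝ) ∉ Set.Ioo 0 c := fun h => lt_irrefl _ h.1
  have hcc : c ∉ Set.Ioo 0 c := fun h => lt_irrefl _ h.2
  have hUpfin : ∀ p, (Up p).Finite := fun p =>
    cross_set_finite (hgc p) hc h0c hcc (by rw [sub_zero, abs_of_pos hc])
  have hDnfin : ∀ p, (Dn p).Finite := fun p =>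
    cross_set_finite (hgc p) hc hcc h0c (by rw [zero_sub, abs_neg, abs_of_pos hc])
  have hupc : ∀ p : ℤ, upcross (fun x => f x - ρ - (p:ℝ) * c) s t c = (Up p).ncard := fun p => rfl
  have hdnc : ∀ p : ℤ, downcross (fun x => f x - ρ - (p:ℝ) * c) s t c = (Dn p).ncard := fun p => rfl
  -- summability
  obtain ⟨M, hM⟩ := isCompact_Icc.exists_bound_of_continuousOn hfc
  have hbound : ∀ p : ℤ, crossings (fun x => f x - ρ - (p:ℝ) * c) s t c ≠ 0 →
      -M - |ρ| - c ≤ (p:ℝ) * c ∧ (p:ℝ) * c ≤ M + |ρ| := by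
    intro p hp
    have : (Up p).ncard ≠ 0 ∨ (Dn p).ncard ≠ 0 := by
      by_contra h
      push_neg at h
      exact hp (by rw [crossings, hupc, hdnc, h.1, h.2])
    have hMx : ∀ x ∈ Set.Icc s t, |f x| ≤ M := by
      intro x hx; have := hM x hx; rwa [Real.norm_eq_abs] at this
    rcases this with h | h
    · obtain ⟨q, hq⟩ := Set.nonempty_of_ncard_ne_zero h
      have hq1 : q.1 ∈ Set.Icc s t := ⟨hq.1, hq.2.1.le.trans hq.2.2.1⟩
      have := hMx q.1 hq1
      have h0 : f q.1 - ρ - (p:ℝ) * c = 0 := hq.2.2.2.1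
      have := abs_le.1 this
      constructor <;> [nlinarith [abs_nonneg ρ, neg_abs_le ρ, le_abs_self ρ];
        nlinarith [neg_abs_le ρ, le_abs_self ρ]]
    · obtain ⟨q, hq⟩ := Set.nonempty_of_ncard_ne_zero h
      have hq1 : q.1 ∈ Set.Icc s t := ⟨hq.1, hq.2.1.le.trans hq.2.2.1⟩
      have := hMx q.1 hq1
      have h0 : f q.1 - ρ - (p:ℝ) * c = c := hq.2.2.2.1
      have := abs_le.1 this
      constructor <;> nlinarith [neg_abs_le ρ, le_abs_self ρ]
  have hsummable : Summable (fun p : ℤ =>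
      ((crossings (fun x => f x - ρ - (p:ℝ) * c) s t c : ℝ))) := by
    apply summable_of_ne_finset_zero
      (s := Finset.Icc ⌈(-M - |ρ| - c) / c⌉ ⌊(M + |ρ|) / c⌋)
    intro p hp
    by_contra h
    have hcr : crossings (fun x => f x - ρ - (p:ℝ) * c) s t c ≠ 0 := by
      intro h'; exact h (by rw [h']; norm_num)
    obtain ⟨hb1, hb2⟩ := hbound p hcr
    apply hp
    rw [Finset.mem_Icc]
    constructor
    · rw [Int.ceil_le]
      rw [div_le_iff₀ hc]
      linarith
    · rw [Int.le_floor]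
      rw [le_div_iff₀ hc]
      linarith
  have hK0 : 0 ≤ levelCrossings (fun x => f x - ρ) s t c :=
    tsum_nonneg (fun p => by positivity)
  -- main bound: truncVar ≤ c * levelCrossings
  have hmain : truncVar f s t (2 * c) ≤ c * levelCrossings (fun x => f x - ρ) s t c := by
    apply Real.sSup_le _ (by positivity)
    rintro x ⟨n, u, v, h1, h2, h3, h4, rfl⟩
    set a : Fin n → ℝ := fun i => f (u i) - ρ with hadef
    set b : Fin n → ℝ := fun i => f (v i) - ρ with hbdef
    set P : Fin n → Finset ℤ := fun i =>
      if a i ≤ b i then Finset.Icc ⌈a i / c⌉ (⌊b i / c⌋ - 1)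
      else Finset.Icc ⌈b i / c⌉ (⌊a i / c⌋ - 1) with hPdef
    set F : Finset ℤ := Finset.univ.biUnion P with hFdef
    -- Step D : per-interval strip count
    have hD : ∀ i, max (|f (v i) - f (u i)| - 2 * c) 0 ≤ c * (P i).card := by
      intro i
      have habs : |f (v i) - f (u i)| = |b i - a i| := by
        simp only [hadef, hbdef]; ring_nf
      rcases le_or_gt (a i) (b i) with h | h
      · rw [habs, hPdef]
        simp only [if_pos h]
        exact strip_count hc h
      · rw [habs, abs_sub_comm, hPdef]
        simp only [if_neg (not_le.2 h)]
        exact strip_count hc h.le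
    -- Step A : for each level p, the number of intervals containing strip p
    -- is at most the number of crossings
    have hA : ∀ p : ℤ, (Finset.univ.filter (fun i => p ∈ P i)).card ≤
        crossings (fun x => f x - ρ - (p:ℝ) * c) s t c := by
      intro p
      have hsplit := Finset.card_filter_add_card_filter_not
        (s := Finset.univ.filter (fun i => p ∈ P i)) (p := fun i => a i ≤ b i)
      rw [Finset.filter_filter, Finset.filter_filter] at hsplit
      have hup : (Finset.univ.filter (fun i => p ∈ P i ∧ a i ≤ b i)).card ≤
          (Up p).ncard := by
        apply card_le_ncard_of_pairs h4 (hUpfin p)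
        intro i hi
        rw [Finset.mem_filter] at hi
        obtain ⟨-, hPi, hab⟩ := hi
        rw [hPdef] at hPi
        simp only [if_pos hab, Finset.mem_Icc] at hPi
        have hpc1 : a i ≤ (p:ℝ) * c := by
          have : a i / c ≤ (p:ℝ) := le_trans (Int.le_ceil _) (by exact_mod_cast hPi.1)
          calc a i = a i / c * c := (div_mul_cancel₀ _ hc.ne').symm
            _ ≤ (p:ℝ) * c := by nlinarith
        have hpc2 : ((p:ℝ) + 1) * c ≤ b i := by
          have h1 : ((p + 1 : ℤ) : ℝ) ≤ (⌊b i / c⌋ : ℝ) := by exact_mod_cast by omega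
          have h2 : (⌊b i / c⌋ : ℝ) ≤ b i / c := Int.floor_le _
          have : ((p:ℝ) + 1) ≤ b i / c := by push_cast at h1; linarith
          calc ((p:ℝ) + 1) * c ≤ b i / c * c := by nlinarith
            _ = b i := div_mul_cancel₀ _ hc.ne'
        have hcont : ContinuousOn (g p) (Set.Icc (u i) (v i)) :=
          (hgc p).mono (Set.Icc_subset_Icc (h1 i) (h3 i))
        have hgu : g p (u i) ≤ 0 := by
          simp only [hgdef]
          have : a i = f (u i) - ρ := rfl
          linarith [hpc1]
        have hgv : c ≤ g p (v i) := by
          simp only [hgdef]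
          have : b i = f (v i) - ρ := rfl
          nlinarith [hpc2]
        obtain ⟨z, w, hz1, hzw, hw1, hgz, hgw, hIoo⟩ :=
          exists_upcross_pair hcont (h2 i) hc hgu hgv
        exact ⟨(z, w), ⟨(h1 i).trans hz1, hzw, hw1.trans (h3 i), hgz, hgw, hIoo⟩,
          hz1, hzw, hw1⟩
      have hdn : (Finset.univ.filter (fun i => p ∈ P i ∧ ¬ a i ≤ b i)).card ≤
          (Dn p).ncard := by
        apply card_le_ncard_of_pairs h4 (hDnfin p)
        intro i hi
        rw [Finset.mem_filter] at hi
        obtain ⟨-, hPi, hab⟩ := hi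
        rw [hPdef] at hPi
        simp only [if_neg hab, Finset.mem_Icc] at hPi
        have hpc1 : b i ≤ (p:ℝ) * c := by
          have : b i / c ≤ (p:ℝ) := le_trans (Int.le_ceil _) (by exact_mod_cast hPi.1)
          calc b i = b i / c * c := (div_mul_cancel₀ _ hc.ne').symm
            _ ≤ (p:ℝ) * c := by nlinarith
        have hpc2 : ((p:ℝ) + 1) * c ≤ a i := by
          have h1' : ((p + 1 : ℤ) : ℝ) ≤ (⌊a i / c⌋ : ℝ) := by exact_mod_cast by omega
          have h2' : (⌊a i / c⌋ : ℝ) ≤ a i / c := Int.floor_le _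
          have : ((p:ℝ) + 1) ≤ a i / c := by push_cast at h1'; linarith
          calc ((p:ℝ) + 1) * c ≤ a i / c * c := by nlinarith
            _ = a i := div_mul_cancel₀ _ hc.ne'
        have hcont : ContinuousOn (fun x => c - g p x) (Set.Icc (u i) (v i)) :=
          continuousOn_const.sub ((hgc p).mono (Set.Icc_subset_Icc (h1 i) (h3 i)))
        have hgu : c - g p (u i) ≤ 0 := by
          simp only [hgdef]
          have : a i = f (u i) - ρ := rfl
          nlinarith [hpc2]
        have hgv : c ≤ c - g p (v i) := by
          simp only [hgdef]
          have : b i = f (v i) - ρ := rfl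
          linarith [hpc1]
        obtain ⟨z, w, hz1, hzw, hw1, hgz, hgw, hIoo⟩ :=
          exists_upcross_pair hcont (h2 i) hc hgu hgv
        refine ⟨(z, w), ⟨(h1 i).trans hz1, hzw, hw1.trans (h3 i), by linarith,
          by linarith, fun r hr => ?_⟩, hz1, hzw, hw1⟩
        have h' := hIoo r hr
        rw [Set.mem_Ioo] at h' ⊢
        constructor <;> [linarith [h'.2]; linarith [h'.1]]
      calc (Finset.univ.filter (fun i => p ∈ P i)).card
          = (Finset.univ.filter (fun i => p ∈ P i ∧ a i ≤ b i)).card +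
            (Finset.univ.filter (fun i => p ∈ P i ∧ ¬ a i ≤ b i)).card := hsplit.symm
        _ ≤ (Up p).ncard + (Dn p).ncard := Nat.add_le_add hup hdn
        _ = crossings (fun x => f x - ρ - (p:ℝ) * c) s t c := by
            rw [crossings, hupc, hdnc]
    -- Step B : double counting
    have hB : ∑ i, (P i).card = ∑ p ∈ F, (Finset.univ.filter (fun i => p ∈ P i)).card := by
      have step1 : ∀ i : Fin n, (P i).card = ∑ p ∈ F, if p ∈ P i then 1 else 0 := by
        intro i
        have hPF : F.filter (fun p => p ∈ P i) = P i := by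
          ext q
          simp only [Finset.mem_filter, hFdef, Finset.mem_biUnion]
          exact ⟨fun h => h.2, fun h => ⟨⟨i, Finset.mem_univ i, h⟩, h⟩⟩
        conv_lhs => rw [← hPF]
        rw [Finset.card_filter]
      have step2 : ∀ p : ℤ, (Finset.univ.filter (fun i => p ∈ P i)).card
          = ∑ i : Fin n, if p ∈ P i then 1 else 0 := fun p => Finset.card_filter _ _
      simp only [step1, step2]
      exact Finset.sum_comm
    -- assemble
    have hrfl : levelCrossings (fun x => f x - ρ) s t c =
        ∑' p : ℤ, ((crossings (fun x => f x - ρ - (p:ℝ) * c) s t c : ℝ)) := rfl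
    calc ∑ i, max (|f (v i) - f (u i)| - 2 * c) 0
        ≤ ∑ i, c * ((P i).card : ℝ) := Finset.sum_le_sum (fun i _ => hD i)
      _ = c * ∑ i, ((P i).card : ℝ) := by rw [← Finset.mul_sum]
      _ = c * ∑ p ∈ F, ((Finset.univ.filter (fun i => p ∈ P i)).card : ℝ) := by
          congr 1
          rw [← Nat.cast_sum, ← Nat.cast_sum, hB]
      _ ≤ c * ∑ p ∈ F, ((crossings (fun x => f x - ρ - (p:ℝ) * c) s t c : ℝ)) := by
          apply mul_le_mul_of_nonneg_left _ hc.le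
          exact Finset.sum_le_sum (fun p _ => by exact_mod_cast hA p)
      _ ≤ c * levelCrossings (fun x => f x - ρ) s t c := by
          apply mul_le_mul_of_nonneg_left _ hc.le
          rw [hrfl]
          exact Summable.sum_le_tsum F (fun p _ => by positivity) hsummable
  have h1c : 0 < 1 / c := by positivity
  calc 1 / c * truncVar f s t (2 * c)
      ≤ 1 / c * (c * levelCrossings (fun x => f x - ρ) s t c) := by
        exact mul_le_mul_of_nonneg_left hmain h1c.le
    _ = levelCrossings (fun x => f x - ρ) s t c := by
        field_simp

end
end

section
/- (Lemma A.) Let 𝒢 be a σ-field and let X be a non-negative real random variable, measurable with respect to 𝒢, such that P(X ≥ F·v) ≤ A·exp(−G·v^α) for all v ≥ 1, where α, F, A, G are positive constants. Then there exists a positive constant Ã, depending only on α, F, A and G, such that for every sub-σ-field ℋ ⊆ 𝒢 and every v ≥ 0: P(E[X² | ℋ] ≥ (F·v)²) ≤ Ã·exp(−(G/2)·v^α) and P(E[X | ℋ] ≥ F·v) ≤ Ã·exp(−(G/2)·v^α). -/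
open MeasureTheory ProbabilityTheory Filter Asymptotics Set
open scoped ENNReal NNReal

set_option maxHeartbeats 1000000

noncomputable section

/-- Finiteness of `∫_{t>0} exp(-(β t^q)) dt` for `β, q > 0`. -/
lemma lemA_exp_fin {β q : ℝ} (hβ : 0 < β) (hq : 0 < q) :
    ∫⁻ t in Set.Ioi (0:ℝ), ENNReal.ofReal (Real.exp (-(β * t ^ q))) < ⊤ := by
  set n : ℕ := ⌈2 / q⌉₊ + 1 with hn
  have hnq : 2 ≤ (n : ℝ) * q := by
    have h1 : 2 / q ≤ (n : ℝ) := by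
      calc (2 : ℝ) / q ≤ (⌈2 / q⌉₊ : ℝ) := Nat.le_ceil _
        _ ≤ (n : ℝ) := by rw [hn]; push_cast; linarith
    calc (2:ℝ) = 2 / q * q := by field_simp
      _ ≤ (n:ℝ) * q := mul_le_mul_of_nonneg_right h1 hq.le
  have key : ∀ t : ℝ, 1 ≤ t →
      Real.exp (-(β * t ^ q)) ≤ ((n.factorial : ℝ)) / β ^ n * t ^ (-2 : ℝ) := by
    intro t ht
    have ht0 : 0 < t := lt_of_lt_of_le one_pos ht
    have htq : 0 ≤ t ^ q := Real.rpow_nonneg ht0.le q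
    have h2 : (β * t ^ q) ^ n / (n.factorial : ℝ) ≤ Real.exp (β * t ^ q) := by
      calc (β * t ^ q) ^ n / (n.factorial : ℝ)
          ≤ ∑ i ∈ Finset.range (n + 1), (β * t ^ q) ^ i / (i.factorial : ℝ) := by
            refine Finset.single_le_sum (f := fun i => (β * t ^ q) ^ i / ((i.factorial : ℝ)))
              (fun i _ => by positivity) (Finset.self_mem_range_succ n)
        _ ≤ Real.exp (β * t ^ q) := Real.sum_le_exp_of_nonneg (by positivity) _
    have h3 : t ^ (2:ℝ) ≤ (t ^ q) ^ n := by
      rw [← Real.rpow_natCast (t ^ q) n, ← Real.rpow_mul ht0.le]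
      exact Real.rpow_le_rpow_of_exponent_le ht (by rw [mul_comm]; exact hnq)
    have h4 : β ^ n * t ^ (2:ℝ) / (n.factorial : ℝ) ≤ Real.exp (β * t ^ q) := by
      refine le_trans ?_ h2
      rw [mul_pow]
      gcongr
    have h5 : (0:ℝ) < β ^ n * t ^ (2:ℝ) / (n.factorial : ℝ) := by positivity
    rw [Real.exp_neg]
    have h6 : (Real.exp (β * t ^ q))⁻¹ ≤ (β ^ n * t ^ (2:ℝ) / (n.factorial : ℝ))⁻¹ := by
      gcongr
    refine h6.trans (le_of_eq ?_)
    rw [Real.rpow_neg ht0.le]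
    have ht2 : t ^ (2:ℝ) ≠ 0 := by positivity
    field_simp
  have hsplit : Set.Ioi (0:ℝ) = Set.Ioc 0 1 ∪ Set.Ioi 1 :=
    (Set.Ioc_union_Ioi_eq_Ioi zero_le_one).symm
  rw [hsplit, lintegral_union measurableSet_Ioi (Set.Ioc_disjoint_Ioi le_rfl)]
  have hp1 : ∫⁻ t in Set.Ioc (0:ℝ) 1, ENNReal.ofReal (Real.exp (-(β * t ^ q))) < ⊤ := by
    have : ∫⁻ t in Set.Ioc (0:ℝ) 1, ENNReal.ofReal (Real.exp (-(β * t ^ q)))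
        ≤ ∫⁻ _ in Set.Ioc (0:ℝ) 1, 1 := by
      refine setLIntegral_mono measurable_const fun x hx => ?_
      rw [← ENNReal.ofReal_one]
      exact ENNReal.ofReal_le_ofReal (Real.exp_le_one_iff.2 (neg_nonpos.mpr
        (mul_nonneg hβ.le (Real.rpow_nonneg hx.1.le q))))
    refine lt_of_le_of_lt this ?_
    simp [Real.volume_Ioc]
  have hp2 : ∫⁻ t in Set.Ioi (1:ℝ), ENNReal.ofReal (Real.exp (-(β * t ^ q))) < ⊤ := by
    have hIntOn : IntegrableOn (fun t : ℝ => ((n.factorial : ℝ)) / β ^ n * t ^ (-2:ℝ)) (Set.Ioi 1) :=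
      (integrableOn_Ioi_rpow_of_lt (by norm_num) one_pos).const_mul _
    have hle : ∫⁻ t in Set.Ioi (1:ℝ), ENNReal.ofReal (Real.exp (-(β * t ^ q)))
        ≤ ∫⁻ t in Set.Ioi (1:ℝ), ENNReal.ofReal (((n.factorial : ℝ)) / β ^ n * t ^ (-2:ℝ)) := by
      refine setLIntegral_mono (by fun_prop) fun x hx => ENNReal.ofReal_le_ofReal (key x (le_of_lt hx))
    refine lt_of_le_of_lt hle ?_
    exact hIntOn.lintegral_lt_top
  exact ENNReal.add_lt_top.2 ⟨hp1, hp2⟩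

/-- Layer-cake style bound: if the tail of a nonnegative `f` is bounded by `B · g t`
for `t > C`, then `∫ f ≤ C + B ∫_{t>0} g`. -/
lemma lemA_layer {Ω : Type} [m : MeasurableSpace Ω] (P : Measure Ω) [IsProbabilityMeasure P]
    {f : Ω → ℝ} (hf : Measurable f) (hf0 : ∀ ω, 0 ≤ f ω) {B C : ℝ} (hC : 0 ≤ C)
    {g : ℝ → ℝ≥0∞} (hg : Measurable g)
    (hbound : ∀ t : ℝ, C < t → P {ω | t ≤ f ω} ≤ ENNReal.ofReal B * g t) :
    ∫⁻ ω, ENNReal.ofReal (f ω) ∂P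
      ≤ ENNReal.ofReal C + ENNReal.ofReal B * ∫⁻ t in Set.Ioi (0:ℝ), g t := by
  rw [lintegral_eq_lintegral_meas_le P (ae_of_all _ hf0) hf.aemeasurable]
  have hsplit : Set.Ioi (0:ℝ) = Set.Ioc 0 C ∪ Set.Ioi C :=
    (Set.Ioc_union_Ioi_eq_Ioi hC).symm
  have hp1 : ∫⁻ t in Set.Ioc (0:ℝ) C, P {a | t ≤ f a} ≤ ENNReal.ofReal C := by
    calc ∫⁻ t in Set.Ioc (0:ℝ) C, P {a | t ≤ f a}
        ≤ ∫⁻ _ in Set.Ioc (0:ℝ) C, 1 :=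
          setLIntegral_mono measurable_const fun x _ => prob_le_one
      _ = ENNReal.ofReal C := by simp [Real.volume_Ioc]
  have hp2 : ∫⁻ t in Set.Ioi C, P {a | t ≤ f a}
      ≤ ENNReal.ofReal B * ∫⁻ t in Set.Ioi (0:ℝ), g t := by
    calc ∫⁻ t in Set.Ioi C, P {a | t ≤ f a}
        ≤ ∫⁻ t in Set.Ioi C, ENNReal.ofReal B * g t :=
          setLIntegral_mono (by fun_prop) fun x hx => hbound x hx
      _ ≤ ∫⁻ t in Set.Ioi (0:ℝ), ENNReal.ofReal B * g t :=
          lintegral_mono_set (Set.Ioi_subset_Ioi hC)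
      _ = ENNReal.ofReal B * ∫⁻ t in Set.Ioi (0:ℝ), g t :=
          lintegral_const_mul' _ _ ENNReal.ofReal_ne_top
  calc ∫⁻ t in Set.Ioi (0:ℝ), P {a | t ≤ f a}
      = (∫⁻ t in Set.Ioc (0:ℝ) C, P {a | t ≤ f a}) + ∫⁻ t in Set.Ioi C, P {a | t ≤ f a} := by
        rw [hsplit, lintegral_union measurableSet_Ioi (Set.Ioc_disjoint_Ioi le_rfl)]
    _ ≤ _ := add_le_add hp1 hp2

/-- Markov inequality for a conditional expectation, after truncation at level `s`. -/
lemma lemA_markov {Ω : Type} [m : MeasurableSpace Ω] (P : Measure Ω) [IsProbabilityMeasure P]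
    {Y : Ω → ℝ} (hYm : Measurable Y) (hY0 : ∀ ω, 0 ≤ Y ω) (hYi : Integrable Y P)
    {mH : MeasurableSpace Ω} (hmH : mH ≤ m)
    {s t : ℝ} (hs : 0 ≤ s) (hst : s < t) :
    ENNReal.ofReal (t - s) * P {ω | t ≤ (P[Y|mH]) ω}
      ≤ ∫⁻ ω, ENNReal.ofReal (if s ≤ Y ω then Y ω else 0) ∂P := by
  set Z : Ω → ℝ := fun ω => if s ≤ Y ω then Y ω else 0 with hZdef
  have hZm : Measurable[m] Z :=
    Measurable.ite (measurableSet_le measurable_const hYm) hYm measurable_const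
  have hZ0 : ∀ ω, 0 ≤ Z ω := fun ω => by
    by_cases h : s ≤ Y ω <;> simp [hZdef, h, hY0 ω]
  have hZle : ∀ ω, Z ω ≤ Y ω := fun ω => by
    by_cases h : s ≤ Y ω <;> simp [hZdef, h, hY0 ω]
  have hZi : Integrable Z P := by
    refine hYi.mono (hZm.aestronglyMeasurable (μ := P)) (ae_of_all _ fun ω => ?_)
    rw [Real.norm_eq_abs, Real.norm_eq_abs, abs_of_nonneg (hZ0 ω), abs_of_nonneg (hY0 ω)]
    exact hZle ω
  have hYle : ∀ ω, Y ω ≤ s + Z ω := fun ω => by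
    by_cases h : s ≤ Y ω
    · simp only [hZdef, h, if_true]; linarith
    · simp only [hZdef, h, if_false]; push_neg at h; linarith
  have h1 : P[Y|mH] ≤ᵐ[P] P[fun ω => s + Z ω|mH] :=
    condExp_mono hYi ((integrable_const s).add hZi) (ae_of_all _ hYle)
  have h2 : P[fun ω => s + Z ω|mH] =ᵐ[P] fun ω => s + (P[Z|mH]) ω := by
    have hadd : P[(fun _ => s) + Z|mH] =ᵐ[P] P[fun _ => s|mH] + P[Z|mH] :=
      condExp_add (integrable_const s) hZi mH
    have hconst : P[fun _ : Ω => s|mH] = fun _ => s := condExp_const hmH s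
    filter_upwards [hadd] with ω hω
    have : P[(fun _ => s) + Z|mH] = P[fun ω => s + Z ω|mH] := rfl
    rw [← this, hω, Pi.add_apply, hconst]
  have h3 : ∀ᵐ ω ∂P, (P[Y|mH]) ω ≤ s + (P[Z|mH]) ω := by
    filter_upwards [h1, h2] with ω hω1 hω2
    calc (P[Y|mH]) ω ≤ (P[fun ω => s + Z ω|mH]) ω := hω1
      _ = s + (P[Z|mH]) ω := hω2
  have hsub : P {ω | t ≤ (P[Y|mH]) ω} ≤ P {ω | t - s ≤ (P[Z|mH]) ω} := by
    refine measure_mono_ae ?_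
    filter_upwards [h3] with ω hω hmem
    have h' : t ≤ (P[Y|mH]) ω := hmem
    show t - s ≤ (P[Z|mH]) ω
    linarith
  have hmark : ENNReal.ofReal (t - s) * P {ω | t - s ≤ (P[Z|mH]) ω}
      ≤ ∫⁻ ω, ENNReal.ofReal ((P[Z|mH]) ω) ∂P := by
    have hmeas : AEMeasurable (fun ω => ENNReal.ofReal ((P[Z|mH]) ω)) P :=
      ((stronglyMeasurable_condExp.mono hmH).measurable.ennreal_ofReal).aemeasurable
    refine le_trans ?_ (mul_meas_ge_le_lintegral₀ hmeas (ENNReal.ofReal (t - s)))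
    refine mul_le_mul_right (measure_mono fun ω hω => ?_) _
    exact ENNReal.ofReal_le_ofReal hω
  have hint : ∫⁻ ω, ENNReal.ofReal ((P[Z|mH]) ω) ∂P = ENNReal.ofReal (∫ ω, (P[Z|mH]) ω ∂P) :=
    (ofReal_integral_eq_lintegral_ofReal integrable_condExp
      (condExp_nonneg (ae_of_all _ hZ0))).symm
  have hZeq : ENNReal.ofReal (∫ ω, Z ω ∂P) = ∫⁻ ω, ENNReal.ofReal (Z ω) ∂P :=
    ofReal_integral_eq_lintegral_ofReal hZi (ae_of_all _ hZ0)
  calc ENNReal.ofReal (t - s) * P {ω | t ≤ (P[Y|mH]) ω}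
      ≤ ENNReal.ofReal (t - s) * P {ω | t - s ≤ (P[Z|mH]) ω} := mul_le_mul_right hsub _
    _ ≤ ∫⁻ ω, ENNReal.ofReal ((P[Z|mH]) ω) ∂P := hmark
    _ = ENNReal.ofReal (∫ ω, (P[Z|mH]) ω ∂P) := hint
    _ = ENNReal.ofReal (∫ ω, Z ω ∂P) := by rw [integral_condExp hmH]
    _ = ∫⁻ ω, ENNReal.ofReal (Z ω) ∂P := hZeq

/-- Lemma A: if the nonnegative `𝒢`-measurable random variable `X` has tails
`P(X ≥ F·v) ≤ A·exp(-G·v^α)` for `v ≥ 1`, then there is a constant `Ã > 0` depending only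
on `α`, `F`, `A`, `G` such that for every sub-σ-field `ℋ ⊆ 𝒢` and every `v ≥ 0`,
`P(E[X²|ℋ] ≥ (F·v)²) ≤ Ã·exp(-(G/2)·v^α)` and `P(E[X|ℋ] ≥ F·v) ≤ Ã·exp(-(G/2)·v^α)`. -/
theorem lemmaA (α F A G : ℝ) (hα : 0 < α) (hF : 0 < F) (hA : 0 < A) (hG : 0 < G) :
    ∃ Atilde : ℝ, 0 < Atilde ∧
      ∀ (Ω : Type) [m : MeasurableSpace Ω] (P : Measure Ω), IsProbabilityMeasure P →
      ∀ mG : MeasurableSpace Ω, mG ≤ m →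
      ∀ X : Ω → ℝ, (∀ ω, 0 ≤ X ω) → Measurable[mG] X →
      (∀ v : ℝ, 1 ≤ v →
        P {ω | F * v ≤ X ω} ≤ ENNReal.ofReal (A * Real.exp (-(G * v ^ α)))) →
      ∀ mH : MeasurableSpace Ω, mH ≤ mG → ∀ v : ℝ, 0 ≤ v →
        P {ω | (F * v) ^ 2 ≤ (P[fun ω' => X ω' ^ 2|mH]) ω} ≤
          ENNReal.ofReal (Atilde * Real.exp (-(G / 2 * v ^ α))) ∧
        P {ω | F * v ≤ (P[X|mH]) ω} ≤
          ENNReal.ofReal (Atilde * Real.exp (-(G / 2 * v ^ α))) := by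
  have h34 : (0:ℝ) < 3/4 := by norm_num
  obtain ⟨c, hcdef⟩ : ∃ c : ℝ, c = (3/4 : ℝ) ^ (α⁻¹) := ⟨_, rfl⟩
  have hc0 : 0 < c := hcdef ▸ Real.rpow_pos_of_pos h34 _
  have hc1 : c < 1 := hcdef ▸ Real.rpow_lt_one (by norm_num) (by norm_num) (inv_pos.2 hα)
  have hcα : c ^ α = 3/4 := by
    rw [hcdef, ← Real.rpow_mul h34.le, inv_mul_cancel₀ hα.ne', Real.rpow_one]
  have h1c2 : 0 < 1 - c ^ 2 := by nlinarith
  have h1c : 0 < 1 - c := by linarith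
  have hFα : 0 < F ^ α := Real.rpow_pos_of_pos hF α
  obtain ⟨β, hβdef⟩ : ∃ β : ℝ, β = G / (4 * F ^ α) := ⟨_, rfl⟩
  have hβ : 0 < β := by rw [hβdef]; positivity
  have hβle : β ≤ G / F ^ α := by
    rw [hβdef, div_le_div_iff₀ (by positivity) hFα]
    nlinarith
  obtain ⟨K1, hK1def⟩ : ∃ K : ℝ≥0∞, K = ∫⁻ t in Set.Ioi (0:ℝ), ENNReal.ofReal (Real.exp (-(β * t ^ α))) := ⟨_, rfl⟩
  obtain ⟨K2, hK2def⟩ : ∃ K : ℝ≥0∞, K = ∫⁻ t in Set.Ioi (0:ℝ), ENNReal.ofReal (Real.exp (-(β * t ^ (α/2)))) := ⟨_, rfl⟩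
  have hK1top : K1 ≠ ⊤ := hK1def ▸ (lemA_exp_fin hβ hα).ne
  have hK2top : K2 ≠ ⊤ := hK2def ▸ (lemA_exp_fin hβ (by positivity : (0:ℝ) < α/2)).ne
  have hK1nn : 0 ≤ K1.toReal := ENNReal.toReal_nonneg
  have hK2nn : 0 ≤ K2.toReal := ENNReal.toReal_nonneg
  obtain ⟨M, hMdef⟩ : ∃ M : ℝ, M = A / (F ^ 2 * (1 - c ^ 2)) * K2.toReal
      + A / (F * (1 - c)) * K1.toReal + Real.exp (2 * G / 3) + 1 := ⟨_, rfl⟩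
  have hMb1 : A / (F * (1 - c)) * K1.toReal ≤ M := by
    have e1 : 0 ≤ A / (F ^ 2 * (1 - c ^ 2)) * K2.toReal := by positivity
    have e2 := (Real.exp_pos (2 * G / 3)).le
    rw [hMdef]; linarith
  have hMb2 : A / (F ^ 2 * (1 - c ^ 2)) * K2.toReal ≤ M := by
    have e1 : 0 ≤ A / (F * (1 - c)) * K1.toReal := by positivity
    have e2 := (Real.exp_pos (2 * G / 3)).le
    rw [hMdef]; linarith
  have hMe : Real.exp (2 * G / 3) ≤ M := by
    have e1 : 0 ≤ A / (F ^ 2 * (1 - c ^ 2)) * K2.toReal := by positivity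
    have e2 : 0 ≤ A / (F * (1 - c)) * K1.toReal := by positivity
    rw [hMdef]; linarith
  have hM0 : 0 < M := lt_of_lt_of_le (Real.exp_pos _) hMe
  refine ⟨M, hM0, ?_⟩
  intro Ω m P hP mG hmG X hX0 hXmG htail mH hmH v hv
  haveI := hP
  have hmH' : mH ≤ m := hmH.trans hmG
  have hXm : Measurable[m] X := hXmG.mono hmG le_rfl
  have hX2m : Measurable[m] (fun ω => X ω ^ 2) := hXm.pow_const 2
  have hX20 : ∀ ω, 0 ≤ X ω ^ 2 := fun ω => sq_nonneg _
  -- general tail bound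
  have htail' : ∀ t : ℝ, F ≤ t →
      P {ω | t ≤ X ω} ≤ ENNReal.ofReal (A * Real.exp (-(G / F ^ α * t ^ α))) := by
    intro t hFt
    have ht0 : 0 < t := lt_of_lt_of_le hF hFt
    have h1 : (1:ℝ) ≤ t / F := (one_le_div hF).2 hFt
    have e1 : F * (t / F) = t := by field_simp
    have e2 : G * (t / F) ^ α = G / F ^ α * t ^ α := by
      rw [Real.div_rpow ht0.le hF.le]; ring
    have h2 := htail (t / F) h1
    rw [e1, e2] at h2
    exact h2
  -- sqrt manipulation
  have hsqrtpow : ∀ t : ℝ, 0 < t → Real.sqrt t ^ α = t ^ (α/2) := by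
    intro t ht0
    rw [Real.sqrt_eq_rpow, ← Real.rpow_mul ht0.le]
    congr 1; ring
  -- integrability of X
  have hXint : Integrable X P := by
    have hbound : ∀ t : ℝ, F < t → P {ω | t ≤ X ω}
        ≤ ENNReal.ofReal A * ENNReal.ofReal (Real.exp (-(β * t ^ α))) := by
      intro t ht
      refine (htail' t ht.le).trans ?_
      rw [← ENNReal.ofReal_mul hA.le]
      refine ENNReal.ofReal_le_ofReal (mul_le_mul_of_nonneg_left (Real.exp_le_exp.2 ?_) hA.le)
      have htα : 0 ≤ t ^ α := Real.rpow_nonneg (le_trans hF.le ht.le) α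
      rw [neg_le_neg_iff]
      exact mul_le_mul_of_nonneg_right hβle htα
    have hlayer := lemA_layer (m := m) P hXm hX0 hF.le (g := fun t => ENNReal.ofReal (Real.exp (-(β * t ^ α))))
      (by fun_prop) hbound
    simp only [← hK1def] at hlayer
    refine ⟨hXm.aestronglyMeasurable, ?_⟩
    rw [hasFiniteIntegral_iff_ofReal (ae_of_all _ hX0)]
    refine lt_of_le_of_lt hlayer ?_
    exact ENNReal.add_lt_top.2 ⟨ENNReal.ofReal_lt_top,
      ENNReal.mul_lt_top ENNReal.ofReal_lt_top (lt_top_iff_ne_top.2 hK1top)⟩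

  -- tail bound for X^2
  have htail2 : ∀ t : ℝ, F ^ 2 < t → P {ω | t ≤ X ω ^ 2}
      ≤ ENNReal.ofReal A * ENNReal.ofReal (Real.exp (-(β * t ^ (α/2)))) := by
    intro t ht
    have ht0 : 0 < t := lt_of_le_of_lt (by positivity) ht
    have hsub : {ω | t ≤ X ω ^ 2} ⊆ {ω | Real.sqrt t ≤ X ω} := fun ω hω => by
      have h1 : Real.sqrt t ≤ Real.sqrt (X ω ^ 2) := Real.sqrt_le_sqrt hω
      rwa [Real.sqrt_sq (hX0 ω)] at h1
    have hFt : F ≤ Real.sqrt t := by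
      rw [← Real.sqrt_sq hF.le]
      exact Real.sqrt_le_sqrt ht.le
    refine le_trans (measure_mono hsub) ((htail' _ hFt).trans ?_)
    rw [← ENNReal.ofReal_mul hA.le]
    refine ENNReal.ofReal_le_ofReal (mul_le_mul_of_nonneg_left (Real.exp_le_exp.2 ?_) hA.le)
    rw [neg_le_neg_iff, hsqrtpow t ht0]
    exact mul_le_mul_of_nonneg_right hβle (Real.rpow_nonneg ht0.le _)
  -- integrability of X^2
  have hX2int : Integrable (fun ω => X ω ^ 2) P := by
    have hlayer := lemA_layer (m := m) P hX2m hX20 (by positivity : (0:ℝ) ≤ F ^ 2)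
      (g := fun t => ENNReal.ofReal (Real.exp (-(β * t ^ (α/2))))) (by fun_prop) htail2
    simp only [← hK2def] at hlayer
    refine ⟨hX2m.aestronglyMeasurable, ?_⟩
    rw [hasFiniteIntegral_iff_ofReal (ae_of_all _ hX20)]
    refine lt_of_le_of_lt hlayer ?_
    exact ENNReal.add_lt_top.2 ⟨ENNReal.ofReal_lt_top,
      ENNReal.mul_lt_top ENNReal.ofReal_lt_top (lt_top_iff_ne_top.2 hK2top)⟩
  by_cases hcv : c * v < 1
  · -- small v: trivial bound by 1
    have hvle : v ≤ 1 / c := by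
      rw [le_div_iff₀ hc0]
      nlinarith
    have hv43 : v ^ α ≤ 4 / 3 := by
      have h1 : v ^ α ≤ (1 / c) ^ α := Real.rpow_le_rpow hv hvle hα.le
      rw [one_div, Real.inv_rpow hc0.le, hcα] at h1
      norm_num at h1
      linarith
    have hone : (1:ℝ) ≤ M * Real.exp (-(G / 2 * v ^ α)) := by
      have h2 : Real.exp (2 * G / 3) * Real.exp (-(G / 2 * v ^ α))
          = Real.exp (2 * G / 3 + -(G / 2 * v ^ α)) := (Real.exp_add _ _).symm
      have h3 : (1:ℝ) ≤ Real.exp (2 * G / 3 + -(G / 2 * v ^ α)) :=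
        Real.one_le_exp (by nlinarith)
      calc (1:ℝ) ≤ Real.exp (2 * G / 3) * Real.exp (-(G / 2 * v ^ α)) := by rw [h2]; exact h3
        _ ≤ M * Real.exp (-(G / 2 * v ^ α)) :=
          mul_le_mul_of_nonneg_right hMe (Real.exp_pos _).le
    have hPone : ∀ s : Set Ω, P s ≤ ENNReal.ofReal (M * Real.exp (-(G / 2 * v ^ α))) := by
      intro s
      refine le_trans prob_le_one ?_
      rw [← ENNReal.ofReal_one]
      exact ENNReal.ofReal_le_ofReal hone
    exact ⟨hPone _, hPone _⟩
  · push_neg at hcv  -- 1 ≤ c * v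
    have hv0 : 0 < v := by nlinarith
    have hv1 : 1 ≤ v := le_trans hcv (by nlinarith)
    have hvα : 0 ≤ v ^ α := Real.rpow_nonneg hv α
    have hexp916 : Real.exp (-(9 * G / 16 * v ^ α)) ≤ Real.exp (-(G / 2 * v ^ α)) :=
      Real.exp_le_exp.2 (by nlinarith)
    have hGF : (0:ℝ) < G / F ^ α := by positivity
    -- the max-exponent inequality, generic
    have hmaxineq : ∀ x t : ℝ, 0 ≤ x → 0 ≤ t →
        3/4 * x ^ α + 1/4 * t ^ α ≤ (max x t) ^ α := by
      intro x t hx ht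
      rcases le_total x t with h | h
      · rw [max_eq_right h]
        have h1 : x ^ α ≤ t ^ α := Real.rpow_le_rpow hx h hα.le
        nlinarith
      · rw [max_eq_left h]
        have h1 : t ^ α ≤ x ^ α := Real.rpow_le_rpow ht h hα.le
        nlinarith
    have hscv : (0:ℝ) < F * (c * v) := by positivity
    have hsα : (F * (c * v)) ^ α = F ^ α * (3/4 * v ^ α) := by
      rw [Real.mul_rpow hF.le (by positivity), Real.mul_rpow hc0.le hv, hcα]
    have hFscv : F ≤ F * (c * v) := by nlinarith
    -- generic exponent bound
    have hexpkey : ∀ t : ℝ, 0 ≤ t →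
        9 * G / 16 * v ^ α + β * t ^ α ≤ G / F ^ α * (max (F * (c * v)) t) ^ α := by
      intro t ht
      have h1 := mul_le_mul_of_nonneg_left (hmaxineq (F * (c * v)) t hscv.le ht) hGF.le
      calc 9 * G / 16 * v ^ α + β * t ^ α
          = G / F ^ α * (3/4 * (F ^ α * (3/4 * v ^ α)) + 1/4 * t ^ α) := by
            rw [hβdef]; field_simp; ring
        _ ≤ _ := by rw [← hsα]; exact h1
    constructor
    · -- X² part
      have hst0 : F * (c * v) < F * v := by nlinarith
      have hst : (F * (c * v)) ^ 2 < (F * v) ^ 2 := by nlinarith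
      have hmark := lemA_markov (m := m) P hX2m hX20 hX2int hmH'
        (by positivity : (0:ℝ) ≤ (F * (c * v)) ^ 2) hst
      have hZm : Measurable[m] (fun ω => if (F * (c * v)) ^ 2 ≤ X ω ^ 2 then X ω ^ 2 else 0) :=
        Measurable.ite (measurableSet_le measurable_const hX2m) hX2m measurable_const
      have hZ0 : ∀ ω, 0 ≤ (if (F * (c * v)) ^ 2 ≤ X ω ^ 2 then X ω ^ 2 else 0) := fun ω => by
        by_cases h : (F * (c * v)) ^ 2 ≤ X ω ^ 2 <;> simp [h, sq_nonneg (X ω)]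
      have hZbound : ∀ t : ℝ, 0 < t →
          P {ω | t ≤ (if (F * (c * v)) ^ 2 ≤ X ω ^ 2 then X ω ^ 2 else 0)} ≤
            ENNReal.ofReal (A * Real.exp (-(9 * G / 16 * v ^ α))) *
              ENNReal.ofReal (Real.exp (-(β * t ^ (α/2)))) := by
        intro t ht
        have hsub : {ω | t ≤ (if (F * (c * v)) ^ 2 ≤ X ω ^ 2 then X ω ^ 2 else 0)}
            ⊆ {ω | max (F * (c * v)) (Real.sqrt t) ≤ X ω} := by
          intro ω hω
          simp only [Set.mem_setOf_eq] at hω ⊢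
          by_cases h : (F * (c * v)) ^ 2 ≤ X ω ^ 2
          · rw [if_pos h] at hω
            have h1 : F * (c * v) ≤ X ω := by
              have := Real.sqrt_le_sqrt h
              rwa [Real.sqrt_sq hscv.le, Real.sqrt_sq (hX0 ω)] at this
            have h2 : Real.sqrt t ≤ X ω := by
              have := Real.sqrt_le_sqrt hω
              rwa [Real.sqrt_sq (hX0 ω)] at this
            exact max_le h1 h2
          · rw [if_neg h] at hω; linarith
        have hFmax : F ≤ max (F * (c * v)) (Real.sqrt t) := le_trans hFscv (le_max_left _ _)
        refine le_trans (measure_mono hsub) ((htail' _ hFmax).trans ?_)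
        rw [← ENNReal.ofReal_mul (by positivity)]
        refine ENNReal.ofReal_le_ofReal ?_
        rw [mul_assoc, ← Real.exp_add]
        refine mul_le_mul_of_nonneg_left (Real.exp_le_exp.2 ?_) hA.le
        have hk := hexpkey (Real.sqrt t) (Real.sqrt_nonneg t)
        rw [hsqrtpow t ht] at hk
        linarith
      have hlayerZ := lemA_layer (m := m) P hZm hZ0 le_rfl
        (g := fun t => ENNReal.ofReal (Real.exp (-(β * t ^ (α/2))))) (by fun_prop)
        (fun t ht => hZbound t ht)
      simp only [← hK2def] at hlayerZ
      rw [ENNReal.ofReal_zero, zero_add] at hlayerZ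
      have hchain : ENNReal.ofReal ((F * v) ^ 2 - (F * (c * v)) ^ 2) *
            P {ω | (F * v) ^ 2 ≤ (P[fun ω' => X ω' ^ 2|mH]) ω}
          ≤ ENNReal.ofReal (A * Real.exp (-(9 * G / 16 * v ^ α)) * K2.toReal) := by
        refine le_trans hmark (le_trans hlayerZ (le_of_eq ?_))
        calc ENNReal.ofReal (A * Real.exp (-(9 * G / 16 * v ^ α))) * K2
            = ENNReal.ofReal (A * Real.exp (-(9 * G / 16 * v ^ α))) * ENNReal.ofReal K2.toReal := by
              rw [ENNReal.ofReal_toReal hK2top]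
          _ = ENNReal.ofReal (A * Real.exp (-(9 * G / 16 * v ^ α)) * K2.toReal) :=
              (ENNReal.ofReal_mul (by positivity)).symm
      have hv21 : (0:ℝ) ≤ v ^ 2 - 1 := by nlinarith
      have hΔ : F ^ 2 * (1 - c ^ 2) ≤ (F * v) ^ 2 - (F * (c * v)) ^ 2 := by
        nlinarith [mul_nonneg (mul_nonneg (sq_nonneg F) h1c2.le) hv21]
      have hΔ0 : (0:ℝ) < (F * v) ^ 2 - (F * (c * v)) ^ 2 := by
        nlinarith [mul_pos (mul_pos (mul_pos hF hF) (mul_pos hv0 hv0)) h1c2]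
      have hM2' : A * K2.toReal ≤ F ^ 2 * (1 - c ^ 2) * M := by
        have h := mul_le_mul_of_nonneg_left hMb2 (by positivity : (0:ℝ) ≤ F ^ 2 * (1 - c ^ 2))
        calc A * K2.toReal = F ^ 2 * (1 - c ^ 2) * (A / (F ^ 2 * (1 - c ^ 2)) * K2.toReal) := by
              field_simp
          _ ≤ F ^ 2 * (1 - c ^ 2) * M := h
      have hfinal : A * Real.exp (-(9 * G / 16 * v ^ α)) * K2.toReal
          ≤ ((F * v) ^ 2 - (F * (c * v)) ^ 2) * (M * Real.exp (-(G / 2 * v ^ α))) := by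
        calc A * Real.exp (-(9 * G / 16 * v ^ α)) * K2.toReal
            = A * K2.toReal * Real.exp (-(9 * G / 16 * v ^ α)) := by ring
          _ ≤ A * K2.toReal * Real.exp (-(G / 2 * v ^ α)) :=
            mul_le_mul_of_nonneg_left hexp916 (by positivity)
          _ ≤ F ^ 2 * (1 - c ^ 2) * M * Real.exp (-(G / 2 * v ^ α)) :=
            mul_le_mul_of_nonneg_right hM2' (Real.exp_pos _).le
          _ ≤ ((F * v) ^ 2 - (F * (c * v)) ^ 2) * (M * Real.exp (-(G / 2 * v ^ α))) := by
            rw [mul_assoc (F ^ 2 * (1 - c ^ 2)) M]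
            exact mul_le_mul_of_nonneg_right hΔ (by positivity)
      rw [← ENNReal.mul_le_mul_iff_right (a := ENNReal.ofReal ((F * v) ^ 2 - (F * (c * v)) ^ 2))
        (ENNReal.ofReal_pos.2 hΔ0).ne' ENNReal.ofReal_ne_top]
      refine le_trans hchain ?_
      rw [← ENNReal.ofReal_mul hΔ0.le]
      exact ENNReal.ofReal_le_ofReal hfinal
    · -- X part
      have hst : F * (c * v) < F * v := by nlinarith
      have hmark := lemA_markov (m := m) P hXm hX0 hXint hmH' hscv.le hst
      have hZm : Measurable[m] (fun ω => if F * (c * v) ≤ X ω then X ω else 0) :=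
        Measurable.ite (measurableSet_le measurable_const hXm) hXm measurable_const
      have hZ0 : ∀ ω, 0 ≤ (if F * (c * v) ≤ X ω then X ω else 0) := fun ω => by
        by_cases h : F * (c * v) ≤ X ω <;> simp [h, hX0 ω]
      have hZbound : ∀ t : ℝ, 0 < t →
          P {ω | t ≤ (if F * (c * v) ≤ X ω then X ω else 0)} ≤
            ENNReal.ofReal (A * Real.exp (-(9 * G / 16 * v ^ α))) *
              ENNReal.ofReal (Real.exp (-(β * t ^ α))) := by
        intro t ht
        have hsub : {ω | t ≤ (if F * (c * v) ≤ X ω then X ω else 0)}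
            ⊆ {ω | max (F * (c * v)) t ≤ X ω} := by
          intro ω hω
          simp only [Set.mem_setOf_eq] at hω ⊢
          by_cases h : F * (c * v) ≤ X ω
          · rw [if_pos h] at hω; exact max_le h hω
          · rw [if_neg h] at hω; linarith
        have hFmax : F ≤ max (F * (c * v)) t := le_trans hFscv (le_max_left _ _)
        refine le_trans (measure_mono hsub) ((htail' _ hFmax).trans ?_)
        rw [← ENNReal.ofReal_mul (by positivity)]
        refine ENNReal.ofReal_le_ofReal ?_
        rw [mul_assoc, ← Real.exp_add]
        refine mul_le_mul_of_nonneg_left (Real.exp_le_exp.2 ?_) hA.le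
        have hk := hexpkey t ht.le
        linarith
      have hlayerZ := lemA_layer (m := m) P hZm hZ0 le_rfl
        (g := fun t => ENNReal.ofReal (Real.exp (-(β * t ^ α)))) (by fun_prop)
        (fun t ht => hZbound t ht)
      simp only [← hK1def] at hlayerZ
      rw [ENNReal.ofReal_zero, zero_add] at hlayerZ
      have hchain : ENNReal.ofReal (F * v - F * (c * v)) * P {ω | F * v ≤ (P[X|mH]) ω}
          ≤ ENNReal.ofReal (A * Real.exp (-(9 * G / 16 * v ^ α)) * K1.toReal) := by
        refine le_trans hmark (le_trans hlayerZ (le_of_eq ?_))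
        calc ENNReal.ofReal (A * Real.exp (-(9 * G / 16 * v ^ α))) * K1
            = ENNReal.ofReal (A * Real.exp (-(9 * G / 16 * v ^ α))) * ENNReal.ofReal K1.toReal := by
              rw [ENNReal.ofReal_toReal hK1top]
          _ = ENNReal.ofReal (A * Real.exp (-(9 * G / 16 * v ^ α)) * K1.toReal) :=
              (ENNReal.ofReal_mul (by positivity)).symm
      have hΔ : F * (1 - c) ≤ F * v - F * (c * v) := by
        have h1 : (0:ℝ) ≤ F * ((v - 1) * (1 - c)) :=
          mul_nonneg hF.le (mul_nonneg (by linarith) h1c.le)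
        calc F * (1 - c) ≤ F * (1 - c) + F * ((v - 1) * (1 - c)) := le_add_of_nonneg_right h1
          _ = F * v - F * (c * v) := by ring
      have hΔ0 : (0:ℝ) < F * v - F * (c * v) := by
        have h1 : F * v - F * (c * v) = F * v * (1 - c) := by ring
        rw [h1]
        exact mul_pos (mul_pos hF hv0) h1c
      have hM1' : A * K1.toReal ≤ F * (1 - c) * M := by
        have h := mul_le_mul_of_nonneg_left hMb1 (by positivity : (0:ℝ) ≤ F * (1 - c))
        calc A * K1.toReal = F * (1 - c) * (A / (F * (1 - c)) * K1.toReal) := by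
              field_simp
          _ ≤ F * (1 - c) * M := h
      have hfinal : A * Real.exp (-(9 * G / 16 * v ^ α)) * K1.toReal
          ≤ (F * v - F * (c * v)) * (M * Real.exp (-(G / 2 * v ^ α))) := by
        calc A * Real.exp (-(9 * G / 16 * v ^ α)) * K1.toReal
            = A * K1.toReal * Real.exp (-(9 * G / 16 * v ^ α)) := by ring
          _ ≤ A * K1.toReal * Real.exp (-(G / 2 * v ^ α)) :=
            mul_le_mul_of_nonneg_left hexp916 (by positivity)
          _ ≤ F * (1 - c) * M * Real.exp (-(G / 2 * v ^ α)) :=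
            mul_le_mul_of_nonneg_right hM1' (Real.exp_pos _).le
          _ ≤ (F * v - F * (c * v)) * (M * Real.exp (-(G / 2 * v ^ α))) := by
            rw [mul_assoc (F * (1 - c)) M]
            exact mul_le_mul_of_nonneg_right hΔ (by positivity)
      rw [← ENNReal.mul_le_mul_iff_right (a := ENNReal.ofReal (F * v - F * (c * v)))
        (ENNReal.ofReal_pos.2 hΔ0).ne' ENNReal.ofReal_ne_top]
      refine le_trans hchain ?_
      rw [← ENNReal.ofReal_mul hΔ0.le]
      exact ENNReal.ofReal_le_ofReal hfinal

end
end
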